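/- arXiv:1406.0190 — 13 statements merged into one kernel-verified Lean document; each statement's English description precedes it below -/
import Mathlib

section
/- Let N and T be positive integers with 0 < 2T ≤ N, let θ = arcsin(√(T/N)), and let k = ⌊π/(4θ)⌋. Then (T/N)·(N/(N−T)) ≥ tan²(θ)·sin²(2kθ) ≥ (T/N)·(N/(N−T))·(1 − 2T/N)². -/
/-!
With `x = T/N = sin² θ` we have `tan² θ = x/(1-x)`, which is the left-hand side, so the upper
bound is `sin² ≤ 1`. Since `k` is the floor of `π/(4θ)`, the angle `2kθ` lies in
`[π/2 - 2θ, π/2]`, where `sin` is increasing; hence `sin (2kθ) ≥ sin (π/2 - 2θ) = cos 2θ = 1 - 2x`,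
which is nonnegative because `2T ≤ N`.
-/

open Real

namespace Real

lemma sin_sq_arcsin_sqrt {x : ℝ} (hx₀ : 0 ≤ x) (hx₁ : x ≤ 1) : sin (arcsin √x) ^ 2 = x := by
  rw [sin_arcsin (by linarith [sqrt_nonneg x]) (sqrt_le_one.mpr hx₁), sq_sqrt hx₀]

lemma tan_sq_arcsin_sqrt {x : ℝ} (hx₀ : 0 ≤ x) (hx₁ : x ≤ 1) :
    tan (arcsin √x) ^ 2 = x / (1 - x) := by
  rw [tan_arcsin, div_pow, sq_sqrt hx₀, sq_sqrt (by linarith)]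

lemma two_mul_floor_pi_div_four_mul_mem {θ : ℝ} (hθ : 0 < θ) :
    π / 2 - 2 * θ ≤ 2 * ⌊π / (4 * θ)⌋₊ * θ ∧ 2 * ⌊π / (4 * θ)⌋₊ * θ ≤ π / 2 := by
  have h4θ : 0 < 4 * θ := by linarith
  have hle : (⌊π / (4 * θ)⌋₊ : ℝ) * (4 * θ) ≤ π :=
    (le_div_iff₀ h4θ).mp (Nat.floor_le (div_nonneg pi_pos.le h4θ.le))
  have hlt : π < (⌊π / (4 * θ)⌋₊ + 1) * (4 * θ) :=
    (div_lt_iff₀ h4θ).mp (Nat.lt_floor_add_one _)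
  constructor <;> linarith

lemma cos_two_mul_le_sin_two_mul_floor_pi_div_four_mul {θ : ℝ} (hθ₀ : 0 < θ) (hθ : θ ≤ π / 2) :
    cos (2 * θ) ≤ sin (2 * ⌊π / (4 * θ)⌋₊ * θ) := by
  obtain ⟨hlo, hhi⟩ := two_mul_floor_pi_div_four_mul_mem hθ₀
  have hnonneg : 0 ≤ 2 * (⌊π / (4 * θ)⌋₊ : ℝ) * θ := by positivity
  rw [← sin_pi_div_two_sub]
  exact strictMonoOn_sin.monotoneOn ⟨by linarith, by linarith⟩
    ⟨by linarith [pi_pos], hhi⟩ hlo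

end Real

theorem stmt_1 (N T : ℕ) (hT : 0 < T) (h2T : 2 * T ≤ N)
    (θ : ℝ) (hθ : θ = Real.arcsin (Real.sqrt ((T : ℝ) / N)))
    (k : ℕ) (hk : k = ⌊Real.pi / (4 * θ)⌋₊) :
    ((T : ℝ) / N) * ((N : ℝ) / ((N : ℝ) - T))
        ≥ Real.tan θ ^ 2 * Real.sin (2 * (k : ℝ) * θ) ^ 2
    ∧ Real.tan θ ^ 2 * Real.sin (2 * (k : ℝ) * θ) ^ 2
        ≥ ((T : ℝ) / N) * ((N : ℝ) / ((N : ℝ) - T)) * (1 - 2 * (T : ℝ) / N) ^ 2 := by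
  have hT' : (0 : ℝ) < T := by exact_mod_cast hT
  have h2T' : 2 * (T : ℝ) ≤ N := by exact_mod_cast h2T
  have hN : (0 : ℝ) < N := by linarith
  have hNT : (N : ℝ) - T ≠ 0 := by linarith
  have hx₀ : 0 < (T : ℝ) / N := by positivity
  have hx₁ : (T : ℝ) / N ≤ 1 / 2 := by rw [div_le_iff₀ hN]; linarith
  have hratio : ((T : ℝ) / N) * ((N : ℝ) / ((N : ℝ) - T)) = tan θ ^ 2 := by
    rw [hθ, tan_sq_arcsin_sqrt hx₀.le (by linarith)]
    field_simp
  have hcos : cos (2 * θ) = 1 - 2 * (T : ℝ) / N := by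
    rw [cos_two_mul_eq_one_sub, hθ, sin_sq_arcsin_sqrt hx₀.le (by linarith)]
    ring
  have hθ₀ : 0 < θ := hθ ▸ arcsin_pos.mpr (sqrt_pos.mpr hx₀)
  have hsin : 1 - 2 * (T : ℝ) / N ≤ sin (2 * k * θ) := by
    rw [← hcos, hk]
    exact cos_two_mul_le_sin_two_mul_floor_pi_div_four_mul hθ₀ (hθ ▸ arcsin_le_pi_div_two _)
  have hcos₀ : 0 ≤ 1 - 2 * (T : ℝ) / N := by rw [mul_div_assoc]; linarith
  rw [hratio]
  constructor
  · exact mul_le_of_le_one_right (sq_nonneg _) (sin_sq_le_one _)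
  · exact mul_le_mul_of_nonneg_left (pow_le_pow_left₀ hcos₀ hsin 2) (sq_nonneg _)
end

section
/- Let N and T be positive integers with 0 < 2T ≤ N, let θ = arcsin(√(T/N)), and let k = ⌊π/(4θ)⌋. Then 4·(T/N)·(1 − T/N) = sin²(2θ) ≥ cos²(2kθ) ≥ 0. -/
open Real

/-! With `sin θ = √t` and `cos θ = √(1 - t)`, the identity is the double-angle formula.
Since `k = ⌊π/(4θ)⌋` is the last Grover iterate before overshooting, the angle `2kθ` lies in
`(π/2 - 2θ, π/2]`, so `0 ≤ cos (2kθ) ≤ cos (π/2 - 2θ) = sin (2θ)`; this needs `π/2 - 2θ ≥ 0`,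
i.e. `θ ≤ π/4`, which is where `t ≤ 1/2` enters. -/

lemma sin_two_mul_arcsin_sqrt_sq {t : ℝ} (h0 : 0 ≤ t) (h1 : t ≤ 1) :
    sin (2 * arcsin √t) ^ 2 = 4 * t * (1 - t) := by
  rw [sin_two_mul, sin_arcsin (by linarith [sqrt_nonneg t]) (sqrt_le_one.mpr h1), cos_arcsin,
    sq_sqrt h0, mul_pow, mul_pow, sq_sqrt h0, sq_sqrt (by linarith)]
  ring

lemma arcsin_sqrt_le_pi_div_four {t : ℝ} (ht : t ≤ 1 / 2) : arcsin √t ≤ π / 4 := by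
  rw [arcsin_le_iff_le_sin' ⟨by linarith [pi_pos], by linarith [pi_pos]⟩, sin_pi_div_four,
    sqrt_le_iff, div_pow, sq_sqrt zero_le_two]
  exact ⟨by positivity, by linarith⟩

lemma two_mul_floor_mul_mem_Ioc {θ : ℝ} (hθ : 0 < θ) :
    2 * ⌊π / (4 * θ)⌋₊ * θ ∈ Set.Ioc (π / 2 - 2 * θ) (π / 2) := by
  have h4θ : 0 < 4 * θ := by positivity
  have hle := (le_div_iff₀ h4θ).1 (Nat.floor_le (div_pos pi_pos h4θ).le)
  have hlt := (div_lt_iff₀ h4θ).1 (Nat.lt_floor_add_one (π / (4 * θ)))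
  constructor <;> nlinarith

lemma cos_two_mul_floor_mul_mem_Icc {θ : ℝ} (h0 : 0 < θ) (hθ : θ ≤ π / 4) :
    cos (2 * ⌊π / (4 * θ)⌋₊ * θ) ∈ Set.Icc 0 (sin (2 * θ)) := by
  obtain ⟨hlo, hhi⟩ := two_mul_floor_mul_mem_Ioc h0
  have hnonneg : 0 ≤ 2 * (⌊π / (4 * θ)⌋₊ : ℝ) * θ := by positivity
  refine ⟨cos_nonneg_of_mem_Icc ⟨by linarith [pi_pos], hhi⟩, ?_⟩
  rw [← cos_pi_div_two_sub]
  exact cos_le_cos_of_nonneg_of_le_pi (by linarith) (by linarith [pi_pos]) hlo.le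

theorem stmt_2 (N T : ℕ) (hT : 0 < T) (h2T : 2 * T ≤ N)
    (θ : ℝ) (hθ : θ = Real.arcsin (Real.sqrt ((T : ℝ) / N)))
    (k : ℕ) (hk : k = ⌊Real.pi / (4 * θ)⌋₊) :
    4 * ((T : ℝ) / N) * (1 - (T : ℝ) / N) = Real.sin (2 * θ) ^ 2
    ∧ Real.cos (2 * (k : ℝ) * θ) ^ 2 ≤ Real.sin (2 * θ) ^ 2
    ∧ 0 ≤ Real.cos (2 * (k : ℝ) * θ) ^ 2 := by
  have hN : (0 : ℝ) < N := by exact_mod_cast hT.trans_le (by omega)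
  have ht0 : 0 < (T : ℝ) / N := div_pos (by exact_mod_cast hT) hN
  have ht2 : (T : ℝ) / N ≤ 1 / 2 := by
    rw [div_le_div_iff₀ hN two_pos]
    exact_mod_cast (by omega : T * 2 ≤ 1 * N)
  have hθ0 : 0 < θ := hθ ▸ arcsin_pos.2 (sqrt_pos.2 ht0)
  obtain ⟨hcos0, hcos⟩ :=
    hk ▸ cos_two_mul_floor_mul_mem_Icc hθ0 (hθ ▸ arcsin_sqrt_le_pi_div_four ht2)
  refine ⟨?_, pow_le_pow_left₀ hcos0 hcos 2, by positivity⟩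
  rw [hθ, sin_two_mul_arcsin_sqrt_sq ht0.le (by linarith)]
end

section
/- Let N and T be positive integers with 0 < T ≤ N, let θ = arcsin(√(T/N)), and let k = ⌊π/(4θ)⌋. Then cos²((2k+1)θ) ≤ T/N, and equivalently sin²((2k+1)θ) ≥ 1 − T/N. -/
/-!
The Grover angle `φ = (2k+1)θ` with `k = ⌊π/(4θ)⌋` overshoots or undershoots `π/2` by at most `θ`,
so `|cos φ| = |sin (π/2 - φ)| ≤ sin θ`, and `sin² θ = T/N`.
-/

open Real

lemma abs_sin_le_sin_of_abs_le {x θ : ℝ} (hx : |x| ≤ θ) (hθ : θ ≤ π / 2) :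
    |sin x| ≤ sin θ := by
  obtain ⟨hlo, hhi⟩ := abs_le.mp hx
  have hsin_le : sin x ≤ sin θ := sin_le_sin_of_le_of_le_pi_div_two (by linarith) hθ hhi
  have hle_sin : sin (-θ) ≤ sin x := sin_le_sin_of_le_of_le_pi_div_two (by linarith) (by linarith) hlo
  rw [sin_neg] at hle_sin
  exact abs_le.mpr ⟨by linarith, hsin_le⟩

lemma cos_sq_le_sin_sq_of_abs_pi_div_two_sub_le {φ θ : ℝ} (hφ : |π / 2 - φ| ≤ θ)
    (hθ : θ ≤ π / 2) : cos φ ^ 2 ≤ sin θ ^ 2 := by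
  rw [← sin_pi_div_two_sub, sq_le_sq, abs_of_nonneg (sin_nonneg_of_nonneg_of_le_pi
    ((abs_nonneg _).trans hφ) (by linarith [pi_pos]))]
  exact abs_sin_le_sin_of_abs_le hφ hθ

lemma abs_pi_div_two_sub_floor_mul_le {θ : ℝ} (hθ : 0 < θ) :
    |π / 2 - (2 * (⌊π / (4 * θ)⌋₊ : ℝ) + 1) * θ| ≤ θ := by
  have h4θ : 0 < 4 * θ := by linarith
  have hfloor_le := (le_div_iff₀ h4θ).mp (Nat.floor_le (div_pos pi_pos h4θ).le)
  have hlt_floor := (div_lt_iff₀ h4θ).mp (Nat.lt_floor_add_one (π / (4 * θ)))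
  exact abs_le.mpr ⟨by nlinarith, by nlinarith⟩

lemma sin_arcsin_sqrt_sq {s : ℝ} (hs0 : 0 ≤ s) (hs1 : s ≤ 1) :
    sin (arcsin (√s)) ^ 2 = s := by
  rw [sin_arcsin (by linarith [sqrt_nonneg s]) (sqrt_le_one.mpr hs1), sq_sqrt hs0]

theorem stmt_3 (N T : ℕ) (hT : 0 < T) (hTN : T ≤ N)
    (θ : ℝ) (hθ : θ = Real.arcsin (Real.sqrt ((T : ℝ) / N)))
    (k : ℕ) (hk : k = ⌊Real.pi / (4 * θ)⌋₊) :
    Real.cos ((2 * (k : ℝ) + 1) * θ) ^ 2 ≤ (T : ℝ) / N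
    ∧ Real.sin ((2 * (k : ℝ) + 1) * θ) ^ 2 ≥ 1 - (T : ℝ) / N := by
  have hratio_pos : 0 < (T : ℝ) / N :=
    div_pos (by exact_mod_cast hT) (by exact_mod_cast hT.trans_le hTN)
  have hratio_le_one : (T : ℝ) / N ≤ 1 :=
    div_le_one_of_le₀ (by exact_mod_cast hTN) (Nat.cast_nonneg N)
  have hθ_pos : 0 < θ := hθ ▸ arcsin_pos.mpr (sqrt_pos.mpr hratio_pos)
  have hsin_sq : sin θ ^ 2 = (T : ℝ) / N := hθ ▸ sin_arcsin_sqrt_sq hratio_pos.le hratio_le_one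
  have hcos_sq : cos ((2 * (k : ℝ) + 1) * θ) ^ 2 ≤ (T : ℝ) / N := by
    rw [← hsin_sq, hk]
    exact cos_sq_le_sin_sq_of_abs_pi_div_two_sub_le (abs_pi_div_two_sub_floor_mul_le hθ_pos)
      (hθ ▸ arcsin_le_pi_div_two _)
  exact ⟨hcos_sq, by linarith [sin_sq_add_cos_sq ((2 * (k : ℝ) + 1) * θ)]⟩
end

section
/- Let N ≥ 1, M ≥ 1 and L ≥ 0 be integers, let T = L + M, let ω = exp(−2πi/N), let s, P, y be integers with N ∤ y and N ∤ P·y. Then (1/N^L)·∑_{(z_1,…,z_L) ∈ {0,…,N−1}^L} |(1/T)·ω^{s·y}·(1 − ω^{M·P·y})/(1 − ω^{P·y}) + (1/T)·∑_{j=1}^{L} ω^{z_j·y}|² = (1/T²)·sin²(π·M·P·y/N)/sin²(π·P·y/N) + L/T², and this value is at most (M² + L)/(M + L)². -/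
/-! Expanding `‖A + ∑ⱼ c ω^(z_j y)‖²` and summing over all `z`, every cross term carries a full
sum `∑_{a<N} ω^(a y)`, which vanishes because `ω^y ≠ 1` is an `N`-th root of unity; only
`N^L (‖A‖² + L ‖c‖²)` survives. The chord formula `‖1 - e^{iθ}‖ = 2 |sin (θ/2)|` turns `‖A‖²`
into the ratio of sines, and `|sin (M x)| ≤ M |sin x|` bounds that ratio by `M²`. -/

open Real Complex ComplexConjugate

theorem Real.abs_sin_nat_mul_le (n : ℕ) (x : ℝ) : |sin (n * x)| ≤ n * |sin x| := by
  induction n with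
  | zero => simp
  | succ n ih =>
    calc |sin ((n + 1 : ℕ) * x)| = |sin (n * x) * cos x + cos (n * x) * sin x| := by
          push_cast; rw [add_mul, one_mul, sin_add]
      _ ≤ |sin (n * x)| * |cos x| + |cos (n * x)| * |sin x| := by
          rw [← abs_mul, ← abs_mul]; exact abs_add_le _ _
      _ ≤ n * |sin x| * 1 + 1 * |sin x| := by
          gcongr
          exacts [abs_cos_le_one x, abs_cos_le_one _]
      _ = (n + 1 : ℕ) * |sin x| := by push_cast; ring

theorem Real.sin_nat_mul_sq_div_sin_sq_le (n : ℕ) (x : ℝ) :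
    sin (n * x) ^ 2 / sin x ^ 2 ≤ n ^ 2 := by
  rcases eq_or_ne (sin x) 0 with hx | hx
  · simp [hx]
  rw [div_le_iff₀ (by positivity), ← mul_pow, sq_le_sq, abs_mul, Nat.abs_cast]
  exact abs_sin_nat_mul_le n x

theorem Complex.normSq_one_sub_exp_mul_I (x : ℝ) :
    normSq (1 - exp (x * I)) = 4 * Real.sin (x / 2) ^ 2 := by
  rw [normSq_eq_norm_sq, ← norm_neg, neg_sub, mul_comm, norm_exp_I_mul_ofReal_sub_one, norm_mul,
    Real.norm_eq_abs, Real.norm_eq_abs, mul_pow, sq_abs, sq_abs]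
  norm_num

theorem Complex.exp_neg_two_pi_I_div_zpow (N : ℕ) (m : ℤ) :
    exp (-2 * π * I / N) ^ m = exp (↑(-2 * π * m / N) * I) := by
  rw [← exp_int_mul]
  congr 1
  push_cast
  ring

theorem Complex.isPrimitiveRoot_exp_neg_two_pi_I_div {N : ℕ} (hN : N ≠ 0) :
    IsPrimitiveRoot (exp (-2 * π * I / N)) N := by
  rw [neg_mul, neg_mul, neg_div, exp_neg]
  exact (isPrimitiveRoot_exp N hN).inv

theorem IsPrimitiveRoot.sum_zpow_mul_eq_zero {K : Type*} [Field K] {ζ : K} {N : ℕ}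
    (hζ : IsPrimitiveRoot ζ N) {y : ℤ} (hy : ¬ (N : ℤ) ∣ y) :
    ∑ a : Fin N, ζ ^ ((a : ℕ) * y) = 0 := by
  have hne : ζ ^ y ≠ 1 := by rwa [Ne, hζ.zpow_eq_one_iff_dvd]
  have hpow : (ζ ^ y) ^ N = 1 := by
    rw [← zpow_natCast, ← zpow_mul, mul_comm, zpow_mul, zpow_natCast, hζ.pow_eq_one, one_zpow]
  simp_rw [mul_comm _ y, zpow_mul, zpow_natCast]
  rw [Fin.sum_univ_eq_sum_range (fun a => (ζ ^ y) ^ a), geom_sum_eq hne, hpow, sub_self, zero_div]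

theorem Complex.sum_normSq_add_of_sum_eq_zero {α : Type*} [Fintype α] {f : α → ℂ} {r : ℝ}
    (hf : ∑ a, f a = 0) (hr : ∀ a, normSq (f a) = r) (B : ℂ) :
    ∑ a, normSq (B + f a) = Fintype.card α * (normSq B + r) := by
  have hcross : ∑ a, (B * conj (f a)).re = 0 := by
    rw [← re_sum, ← Finset.mul_sum, ← map_sum, hf, map_zero, mul_zero, zero_re]
  simp_rw [normSq_add, hr, Finset.sum_add_distrib, ← Finset.mul_sum, hcross]
  simp only [Finset.sum_const, Finset.card_univ, nsmul_eq_mul, mul_zero, add_zero]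
  ring

theorem Complex.sum_pi_normSq_add_sum_of_sum_eq_zero {α : Type*} [Fintype α] {f : α → ℂ} {r : ℝ}
    (hf : ∑ a, f a = 0) (hr : ∀ a, normSq (f a) = r) (L : ℕ) (A : ℂ) :
    ∑ z : Fin L → α, normSq (A + ∑ j, f (z j)) = Fintype.card α ^ L * (normSq A + L * r) := by
  induction L generalizing A with
  | zero => simp
  | succ L ih =>
    rw [← (Fin.consEquiv fun _ => α).sum_comp, Fintype.sum_prod_type, Finset.sum_comm]
    have hsplit (a : α) (w : Fin L → α) :
        A + ∑ j, f (Fin.consEquiv (fun _ => α) (a, w) j) = (A + ∑ j, f (w j)) + f a := by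
      simp only [Fin.consEquiv, Equiv.coe_fn_mk, Fin.sum_univ_succ, Fin.cons_zero, Fin.cons_succ]
      ring
    simp_rw [hsplit, sum_normSq_add_of_sum_eq_zero hf hr, ← Finset.mul_sum,
      Finset.sum_add_distrib, ih]
    simp only [Finset.sum_const, Finset.card_univ, Fintype.card_fun, Fintype.card_fin, nsmul_eq_mul]
    push_cast
    ring

theorem Complex.normSq_one_sub_exp_neg_two_pi_I_div_zpow (N : ℕ) (m : ℤ) :
    normSq (1 - exp (-2 * π * I / N) ^ m) = 4 * Real.sin (π * m / N) ^ 2 := by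
  rw [exp_neg_two_pi_I_div_zpow, normSq_one_sub_exp_mul_I,
    show -2 * π * m / N / 2 = -(π * m / N) by ring, Real.sin_neg, neg_sq]

theorem stmt_9_general (N M L : ℕ) (hN : 1 ≤ N) (T : ℕ) (hT : T = L + M)
    (ω : ℂ) (hω : ω = Complex.exp (-2 * Real.pi * Complex.I / N))
    (s P y : ℤ) (hy : ¬ (N : ℤ) ∣ y) :
    (1 / (N : ℝ) ^ L) * ∑ z : Fin L → Fin N,
        ‖(1 / (T : ℂ)) * ω ^ (s * y) *
            ((1 - ω ^ ((M : ℤ) * (P * y))) / (1 - ω ^ (P * y)))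
          + (1 / (T : ℂ)) * ∑ j : Fin L, ω ^ (((z j : ℕ) : ℤ) * y)‖ ^ 2
      = (1 / (T : ℝ) ^ 2) *
          (Real.sin (Real.pi * M * P * y / N) ^ 2 / Real.sin (Real.pi * P * y / N) ^ 2)
        + (L : ℝ) / (T : ℝ) ^ 2
    ∧ (1 / (T : ℝ) ^ 2) *
          (Real.sin (Real.pi * M * P * y / N) ^ 2 / Real.sin (Real.pi * P * y / N) ^ 2)
        + (L : ℝ) / (T : ℝ) ^ 2
      ≤ ((M : ℝ) ^ 2 + L) / ((M : ℝ) + L) ^ 2 := by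
  have hζ : IsPrimitiveRoot ω N := hω ▸ isPrimitiveRoot_exp_neg_two_pi_I_div (by omega)
  have hunit (m : ℤ) : normSq (ω ^ m) = 1 := by
    rw [normSq_eq_norm_sq, norm_zpow, hζ.norm'_eq_one (by omega), one_zpow, one_pow]
  have hchord (m : ℤ) : normSq (1 - ω ^ m) = 4 * Real.sin (π * m / N) ^ 2 :=
    hω ▸ normSq_one_sub_exp_neg_two_pi_I_div_zpow N m
  set c : ℂ := 1 / T
  set A := c * ω ^ (s * y) * ((1 - ω ^ ((M : ℤ) * (P * y))) / (1 - ω ^ (P * y)))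
  have hc : normSq c = 1 / (T : ℝ) ^ 2 := by simp [c, sq]
  have hA : normSq A = 1 / (T : ℝ) ^ 2 *
      (Real.sin (π * M * P * y / N) ^ 2 / Real.sin (π * P * y / N) ^ 2) := by
    rw [normSq_mul, normSq_mul, hc, hunit, normSq_div, hchord, hchord, mul_one,
      mul_div_mul_left _ _ four_ne_zero]
    push_cast
    simp only [mul_assoc]
  have hsum : ∑ z : Fin L → Fin N, ‖A + c * ∑ j, ω ^ (((z j : ℕ) : ℤ) * y)‖ ^ 2
      = N ^ L * (normSq A + L * normSq c) := by
    have hroots : ∑ a : Fin N, c * ω ^ (((a : ℕ) : ℤ) * y) = 0 := by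
      rw [← Finset.mul_sum, hζ.sum_zpow_mul_eq_zero hy, mul_zero]
    have hterm (a : Fin N) : normSq (c * ω ^ (((a : ℕ) : ℤ) * y)) = normSq c := by
      rw [normSq_mul, hunit, mul_one]
    simp_rw [Complex.sq_norm, Finset.mul_sum]
    simpa using sum_pi_normSq_add_sum_of_sum_eq_zero hroots hterm L A
  constructor
  · rw [hsum, ← mul_assoc, one_div_mul_cancel (by positivity), one_mul, hA, hc]
    ring
  · have hq := Real.sin_nat_mul_sq_div_sin_sq_le M (π * P * y / N)
    rw [show (M : ℝ) * (π * P * y / N) = π * M * P * y / N by ring] at hq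
    rw [hT, Nat.cast_add, add_comm (L : ℝ), one_div_mul_eq_div, ← add_div]
    gcongr

theorem stmt_9 (N M L : ℕ) (hN : 1 ≤ N) (hM : 1 ≤ M) (T : ℕ) (hT : T = L + M)
    (ω : ℂ) (hω : ω = Complex.exp (-2 * Real.pi * Complex.I / N))
    (s P y : ℤ) (hy : ¬ (N : ℤ) ∣ y) (hPy : ¬ (N : ℤ) ∣ P * y) :
    (1 / (N : ℝ) ^ L) * ∑ z : Fin L → Fin N,
        ‖(1 / (T : ℂ)) * ω ^ (s * y) *
            ((1 - ω ^ ((M : ℤ) * (P * y))) / (1 - ω ^ (P * y)))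
          + (1 / (T : ℂ)) * ∑ j : Fin L, ω ^ (((z j : ℕ) : ℤ) * y)‖ ^ 2
      = (1 / (T : ℝ) ^ 2) *
          (Real.sin (Real.pi * M * P * y / N) ^ 2 / Real.sin (Real.pi * P * y / N) ^ 2)
        + (L : ℝ) / (T : ℝ) ^ 2
    ∧ (1 / (T : ℝ) ^ 2) *
          (Real.sin (Real.pi * M * P * y / N) ^ 2 / Real.sin (Real.pi * P * y / N) ^ 2)
        + (L : ℝ) / (T : ℝ) ^ 2
      ≤ ((M : ℝ) ^ 2 + L) / ((M : ℝ) + L) ^ 2 :=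
  stmt_9_general N M L hN T hT ω hω s P y hy
end

section
/- Let N ≥ 1 and L ≥ 0 be integers, let ω = exp(−2πi/N), let y be an integer with N ∤ y and N ∤ 2·y, let s be any integer, and let a, b be real numbers. Then the variance over all N^L tuples (z_1,…,z_L) with each z_j ∈ {0,1,…,N−1} of the random quantity X = |a·ω^{s·y} + b·∑_{j=1}^{L} ω^{z_j·y}|² equals b⁴·(L² − L) + 2·a²·b²·L. -/
/-!
Put `ζ = ω ^ y`, `u = ω ^ (s * y)`, `S z = ∑ j, ζ ^ z j` and `T z = ∑ j, ζ⁻¹ ^ z j`.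
As `‖ζ‖ = ‖u‖ = 1`, `T = conj S` and `X = (a u + b S) (a u⁻¹ + b T)`, so `E X` and `E X²` are
combinations of the moments `E [S ^ p * T ^ q]` with `p, q ≤ 2`.

Adding `1` (mod `N`) to every coordinate preserves the uniform measure and multiplies
`S ^ p * T ^ q` by `ζ ^ (p - q)`; since `ζ ≠ 1` and `ζ ^ 2 ≠ 1`, the moments with `p ≠ q` vanish.
The moments `E [S T]` and `E [S² T²]` expand into averages of characters
`z ↦ ∏ j, ζ ^ (z j * c j)` with all `|c j| ≤ 2`, which are `1` for `c = 0` and `0` otherwise.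
Counting index tuples gives `E [S T] = L` and `E [S² T²] = #{(j, k, l, m) | {j, k} = {l, m}} =
2 L² - L`, hence `E X = a² + b² L` and `E X² = a⁴ + 4 a² b² L + b⁴ (2 L² - L)`.
-/

open Finset

lemma Fintype.sum_eq_zero_of_comp_equiv_eq_mul {ι R : Type*} [Fintype ι] [Ring R] [IsDomain R]
    (σ : ι ≃ ι) {f : ι → R} {c : R} (hc : c ≠ 1) (hf : ∀ i, f (σ i) = c * f i) :
    ∑ i, f i = 0 := by
  have h : c * ∑ i, f i = ∑ i, f i := by
    simp only [mul_sum, ← hf, Equiv.sum_comp σ f]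
  by_contra h0
  exact hc ((mul_eq_right₀ h0).1 h)

lemma Fin.sum_pow_eq_zero_of_pow_eq_one {K : Type*} [DivisionRing K] {N : ℕ} {η : K}
    (hη : η ^ N = 1) (hη1 : η ≠ 1) :
    ∑ x : Fin N, η ^ (x : ℕ) = 0 := by
  rw [Fin.sum_univ_eq_sum_range (η ^ ·), geom_sum_eq hη1, hη, sub_self, zero_div]

lemma Pi.single_one_inj {ι : Type*} [DecidableEq ι] {j k : ι} :
    (Pi.single j 1 : ι → ℤ) = Pi.single k 1 ↔ j = k :=
  ⟨fun h => by simpa [Pi.single_apply, eq_comm] using congrFun h k, by rintro rfl; rfl⟩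

variable {K : Type*} [Field K] {N L : ℕ}

noncomputable def powerSum (η : K) (z : Fin L → Fin N) : K := ∑ j, η ^ (z j : ℕ)

lemma powerSum_add_one [NeZero N] {η : K} (hη : η ^ N = 1) (z : Fin L → Fin N) :
    powerSum η (fun j => z j + 1) = η * powerSum η z := by
  simp only [powerSum, mul_sum]
  refine sum_congr rfl fun j _ => ?_
  rw [Fin.val_add, Fin.val_one', ← pow_eq_pow_mod _ hη, pow_add, ← pow_eq_pow_mod _ hη,
    pow_one, mul_comm]

lemma sum_powerSum_pow_mul_pow_eq_zero [NeZero N] {ζ : K} (hζN : ζ ^ N = 1) {p q : ℕ}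
    (hpq : ζ ^ ((p : ℤ) - q) ≠ 1) :
    ∑ z : Fin L → Fin N, powerSum ζ z ^ p * powerSum ζ⁻¹ z ^ q = 0 := by
  have hζ0 : ζ ≠ 0 := (IsUnit.of_pow_eq_one hζN (NeZero.ne N)).ne_zero
  let σ : (Fin L → Fin N) ≃ (Fin L → Fin N) := Equiv.piCongrRight fun _ => Equiv.addRight 1
  have hσ : ∀ z, σ z = fun j => z j + 1 := fun z => rfl
  refine Fintype.sum_eq_zero_of_comp_equiv_eq_mul σ hpq fun z => ?_
  rw [hσ, powerSum_add_one hζN, powerSum_add_one (by rw [inv_pow, hζN, inv_one]),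
    zpow_sub₀ hζ0, zpow_natCast, zpow_natCast, mul_pow, mul_pow, inv_pow]
  ring

noncomputable def rootMonomial (ζ : K) (c : Fin L → ℤ) (z : Fin L → Fin N) : K :=
  ∏ j, ζ ^ ((z j : ℤ) * c j)

lemma rootMonomial_add {ζ : K} (hζ : ζ ≠ 0) (c d : Fin L → ℤ) (z : Fin L → Fin N) :
    rootMonomial ζ (c + d) z = rootMonomial ζ c z * rootMonomial ζ d z := by
  simp only [rootMonomial, ← prod_mul_distrib, Pi.add_apply, mul_add, zpow_add₀ hζ]

lemma rootMonomial_single (ζ : K) (j : Fin L) (m : ℤ) (z : Fin L → Fin N) :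
    rootMonomial ζ (Pi.single j m) z = ζ ^ ((z j : ℤ) * m) := by
  rw [rootMonomial, Fintype.prod_eq_single j fun i hi => by simp [hi]]
  simp

lemma sum_rootMonomial {ζ : K} (hζN : ζ ^ N = 1)
    (hζ : ∀ m : ℤ, m ≠ 0 → |m| ≤ 2 → ζ ^ m ≠ 1) {c : Fin L → ℤ} (hc : ∀ i, |c i| ≤ 2) :
    ∑ z : Fin L → Fin N, rootMonomial ζ c z = if c = 0 then (N : K) ^ L else 0 := by
  have hfactor : ∀ i, ∑ x : Fin N, ζ ^ ((x : ℤ) * c i) = ∑ x : Fin N, (ζ ^ c i) ^ (x : ℕ) :=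
    fun i => sum_congr rfl fun x _ => by rw [mul_comm, zpow_mul, zpow_natCast]
  simp only [rootMonomial]
  rw [← Fintype.prod_sum fun i (x : Fin N) => ζ ^ ((x : ℤ) * c i)]
  simp only [hfactor]
  split_ifs with hc0
  · simp [hc0]
  · obtain ⟨i, hi⟩ := Function.ne_iff.1 hc0
    refine prod_eq_zero (mem_univ i) (Fin.sum_pow_eq_zero_of_pow_eq_one ?_ (hζ _ hi (hc i)))
    rw [← zpow_natCast, ← zpow_mul, mul_comm, zpow_mul, zpow_natCast, hζN, one_zpow]

lemma powerSum_eq_sum_rootMonomial (ζ : K) (z : Fin L → Fin N) :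
    powerSum ζ z = ∑ j, rootMonomial ζ (Pi.single j 1) z := by
  simp [powerSum, rootMonomial_single]

lemma powerSum_inv_eq_sum_rootMonomial (ζ : K) (z : Fin L → Fin N) :
    powerSum ζ⁻¹ z = ∑ j, rootMonomial ζ (-Pi.single j 1) z := by
  simp [powerSum, ← Pi.single_neg, rootMonomial_single]

section Moments

variable {ζ : K} (hζN : ζ ^ N = 1) (hζ : ∀ m : ℤ, m ≠ 0 → |m| ≤ 2 → ζ ^ m ≠ 1)
include hζN hζ

lemma sum_sum_rootMonomial_mul_sum_rootMonomial_neg [NeZero N] {α : Type*} [Fintype α]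
    (u : α → Fin L → ℤ) (hu : ∀ a i, u a i ∈ Set.Icc 0 2) :
    ∑ z : Fin L → Fin N, (∑ a, rootMonomial ζ (u a) z) * ∑ b, rootMonomial ζ (-u b) z =
      ∑ a, ∑ b, if u a = u b then (N : K) ^ L else 0 := by
  have hζ0 : ζ ≠ 0 := (IsUnit.of_pow_eq_one hζN (NeZero.ne N)).ne_zero
  simp only [sum_mul_sum, ← rootMonomial_add hζ0]
  rw [sum_comm]
  refine sum_congr rfl fun a _ => ?_
  rw [sum_comm]
  refine sum_congr rfl fun b _ => ?_
  rw [sum_rootMonomial hζN hζ fun i => ?_]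
  · simp only [← sub_eq_add_neg, sub_eq_zero]
  · obtain ⟨ha0, ha2⟩ := hu a i
    obtain ⟨hb0, hb2⟩ := hu b i
    simp only [Pi.add_apply, Pi.neg_apply, abs_le]
    constructor <;> linarith

lemma sum_powerSum_pow_mul_pow_eq_zero_of_ne [NeZero N] {p q : ℕ} (hpq : p ≠ q)
    (hpq2 : |(p : ℤ) - q| ≤ 2) :
    ∑ z : Fin L → Fin N, powerSum ζ z ^ p * powerSum ζ⁻¹ z ^ q = 0 :=
  sum_powerSum_pow_mul_pow_eq_zero hζN (hζ _ (sub_ne_zero.2 (Nat.cast_injective.ne hpq)) hpq2)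

lemma sum_powerSum_mul_powerSum_inv [NeZero N] :
    ∑ z : Fin L → Fin N, powerSum ζ z * powerSum ζ⁻¹ z = L * (N : K) ^ L := by
  simp_rw [powerSum_inv_eq_sum_rootMonomial, powerSum_eq_sum_rootMonomial]
  rw [sum_sum_rootMonomial_mul_sum_rootMonomial_neg hζN hζ _ fun j i => ?_]
  · simp [Pi.single_one_inj]
  · simp only [Pi.single_apply]
    split_ifs <;> norm_num

lemma sum_powerSum_sq_mul_powerSum_inv_sq [NeZero N] :
    ∑ z : Fin L → Fin N, powerSum ζ z ^ 2 * powerSum ζ⁻¹ z ^ 2 =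
      (2 * L ^ 2 - L) * (N : K) ^ L := by
  have hζ0 : ζ ≠ 0 := (IsUnit.of_pow_eq_one hζN (NeZero.ne N)).ne_zero
  set δ : Fin L → Fin L → ℤ := fun j => Pi.single j 1
  have hS : ∀ z : Fin L → Fin N,
      powerSum ζ z ^ 2 = ∑ p : Fin L × Fin L, rootMonomial ζ (δ p.1 + δ p.2) z := by
    intro z
    simp only [sq, powerSum_eq_sum_rootMonomial, sum_mul_sum, Fintype.sum_prod_type,
      rootMonomial_add hζ0, δ]
  have hT : ∀ z : Fin L → Fin N,
      powerSum ζ⁻¹ z ^ 2 = ∑ p : Fin L × Fin L, rootMonomial ζ (-(δ p.1 + δ p.2)) z := by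
    intro z
    simp only [sq, powerSum_inv_eq_sum_rootMonomial, sum_mul_sum, Fintype.sum_prod_type,
      neg_add, rootMonomial_add hζ0, δ]
  have incl_excl : ∀ j k l m : Fin L,
      (if δ j + δ k = δ l + δ m then (N : K) ^ L else 0) =
        (if k = m ∧ j = l then (N : K) ^ L else 0) +
          (if j = m ∧ k = l then (N : K) ^ L else 0) -
            if k = m ∧ j = l ∧ j = k then (N : K) ^ L else 0 := by
    intro j k l m
    simp only [δ, Pi.single_add_single_eq_single_add_single one_ne_zero one_ne_zero]
    by_cases j = l <;> by_cases k = m <;> by_cases j = m <;> by_cases k = l <;> by_cases j = k <;>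
      simp_all
  simp only [hS, hT]
  rw [sum_sum_rootMonomial_mul_sum_rootMonomial_neg hζN hζ _ fun p i => ?_]
  · simp only [Fintype.sum_prod_type, incl_excl]
    simp [sum_add_distrib, sum_sub_distrib, ite_and]
    ring
  · simp only [δ, Pi.add_apply, Pi.single_apply]
    split_ifs <;> norm_num

end Moments

lemma ofReal_norm_sq_add_powerSum {ζ u : ℂ} (hζ : ‖ζ‖ = 1) (hu : ‖u‖ = 1) (a b : ℝ)
    (z : Fin L → Fin N) :
    ((‖a * u + b * powerSum ζ z‖ ^ 2 : ℝ) : ℂ) =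
      (a * u + b * powerSum ζ z) * (a * u⁻¹ + b * powerSum ζ⁻¹ z) := by
  rw [Complex.sq_norm, ← Complex.mul_conj]
  congr 1
  simp [powerSum, map_sum, Complex.inv_eq_conj hζ, Complex.inv_eq_conj hu]

section Variance

variable [NeZero N] {ζ : ℂ} (hζN : ζ ^ N = 1)
  (hζ : ∀ m : ℤ, m ≠ 0 → |m| ≤ 2 → ζ ^ m ≠ 1) {u : ℂ} (hu : ‖u‖ = 1) (a b : ℝ)
include hζN hζ hu

lemma sum_norm_sq_add_powerSum :
    ∑ z : Fin L → Fin N, ‖(a : ℂ) * u + b * powerSum ζ z‖ ^ 2 =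
      N ^ L * (a ^ 2 + b ^ 2 * L) := by
  have hu0 : u ≠ 0 := norm_ne_zero_iff.1 (hu ▸ one_ne_zero)
  have vanish := fun p q =>
    sum_powerSum_pow_mul_pow_eq_zero_of_ne hζN hζ (L := L) (p := p) (q := q)
  have hX : ∀ z : Fin L → Fin N, ((‖(a : ℂ) * u + b * powerSum ζ z‖ ^ 2 : ℝ) : ℂ) =
      a ^ 2 + (a * b * u) * (powerSum ζ z ^ 0 * powerSum ζ⁻¹ z ^ 1) +
        (a * b * u⁻¹) * (powerSum ζ z ^ 1 * powerSum ζ⁻¹ z ^ 0) +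
        b ^ 2 * (powerSum ζ z * powerSum ζ⁻¹ z) := fun z => by
    rw [ofReal_norm_sq_add_powerSum (Complex.norm_eq_one_of_pow_eq_one hζN (NeZero.ne N)) hu]
    field_simp
    ring
  apply Complex.ofReal_injective
  rw [Complex.ofReal_sum]
  simp only [hX, sum_add_distrib, ← mul_sum, sum_const, card_univ, Fintype.card_pi,
    Fintype.card_fin, prod_const, sum_powerSum_mul_powerSum_inv hζN hζ,
    vanish 0 1 (by norm_num) (by norm_num), vanish 1 0 (by norm_num) (by norm_num)]
  push_cast
  ring

lemma sum_norm_sq_add_powerSum_sq :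
    ∑ z : Fin L → Fin N, (‖(a : ℂ) * u + b * powerSum ζ z‖ ^ 2) ^ 2 =
      N ^ L * (a ^ 4 + 4 * a ^ 2 * b ^ 2 * L + b ^ 4 * (2 * L ^ 2 - L)) := by
  have hu0 : u ≠ 0 := norm_ne_zero_iff.1 (hu ▸ one_ne_zero)
  have vanish := fun p q =>
    sum_powerSum_pow_mul_pow_eq_zero_of_ne hζN hζ (L := L) (p := p) (q := q)
  -- monomials are written as `S ^ p * T ^ q` so that `vanish p q` rewrites them verbatim
  have hX : ∀ z : Fin L → Fin N, (((‖(a : ℂ) * u + b * powerSum ζ z‖ ^ 2) ^ 2 : ℝ) : ℂ) =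
      a ^ 4 + (2 * a ^ 3 * b * u) * (powerSum ζ z ^ 0 * powerSum ζ⁻¹ z ^ 1) +
        (2 * a ^ 3 * b * u⁻¹) * (powerSum ζ z ^ 1 * powerSum ζ⁻¹ z ^ 0) +
        (a ^ 2 * b ^ 2 * u ^ 2) * (powerSum ζ z ^ 0 * powerSum ζ⁻¹ z ^ 2) +
        (a ^ 2 * b ^ 2 * u⁻¹ ^ 2) * (powerSum ζ z ^ 2 * powerSum ζ⁻¹ z ^ 0) +
        (2 * a * b ^ 3 * u) * (powerSum ζ z ^ 1 * powerSum ζ⁻¹ z ^ 2) +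
        (2 * a * b ^ 3 * u⁻¹) * (powerSum ζ z ^ 2 * powerSum ζ⁻¹ z ^ 1) +
        4 * a ^ 2 * b ^ 2 * (powerSum ζ z * powerSum ζ⁻¹ z) +
        b ^ 4 * (powerSum ζ z ^ 2 * powerSum ζ⁻¹ z ^ 2) := fun z => by
    rw [Complex.ofReal_pow,
      ofReal_norm_sq_add_powerSum (Complex.norm_eq_one_of_pow_eq_one hζN (NeZero.ne N)) hu]
    field_simp
    ring
  apply Complex.ofReal_injective
  rw [Complex.ofReal_sum]
  simp only [hX, sum_add_distrib, ← mul_sum, sum_const, card_univ,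
    Fintype.card_pi, Fintype.card_fin, prod_const, sum_powerSum_mul_powerSum_inv hζN hζ,
    sum_powerSum_sq_mul_powerSum_inv_sq hζN hζ, vanish 0 1 (by norm_num) (by norm_num),
    vanish 1 0 (by norm_num) (by norm_num), vanish 0 2 (by norm_num) (by norm_num),
    vanish 2 0 (by norm_num) (by norm_num), vanish 1 2 (by norm_num) (by norm_num),
    vanish 2 1 (by norm_num) (by norm_num)]
  push_cast
  ring

theorem variance_norm_sq_add_powerSum :
    (1 / (N : ℝ) ^ L) * ∑ z : Fin L → Fin N, (‖(a : ℂ) * u + b * powerSum ζ z‖ ^ 2) ^ 2 -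
        ((1 / (N : ℝ) ^ L) * ∑ z : Fin L → Fin N, ‖(a : ℂ) * u + b * powerSum ζ z‖ ^ 2) ^ 2 =
      b ^ 4 * ((L : ℝ) ^ 2 - L) + 2 * a ^ 2 * b ^ 2 * L := by
  have hN : (N : ℝ) ≠ 0 := Nat.cast_ne_zero.2 (NeZero.ne N)
  rw [sum_norm_sq_add_powerSum_sq hζN hζ hu, sum_norm_sq_add_powerSum hζN hζ hu]
  field_simp
  ring

end Variance

open Real Complex

theorem stmt_11 (N : ℕ) (hN : 1 ≤ N) (L : ℕ)
    (ω : ℂ) (hω : ω = Complex.exp (-2 * Real.pi * Complex.I / N))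
    (y : ℤ) (hy : ¬ (N : ℤ) ∣ y) (hy2 : ¬ (N : ℤ) ∣ 2 * y)
    (s : ℤ) (a b : ℝ) :
    (1 / (N : ℝ) ^ L) * (∑ z : Fin L → Fin N,
        (‖((a : ℂ) * ω ^ (s * y)
            + (b : ℂ) * ∑ j : Fin L, ω ^ (((z j : ℕ) : ℤ) * y))‖ ^ 2) ^ 2)
      - ((1 / (N : ℝ) ^ L) * ∑ z : Fin L → Fin N,
          ‖((a : ℂ) * ω ^ (s * y)
            + (b : ℂ) * ∑ j : Fin L, ω ^ (((z j : ℕ) : ℤ) * y))‖ ^ 2) ^ 2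
      = b ^ 4 * ((L : ℝ) ^ 2 - L) + 2 * a ^ 2 * b ^ 2 * L := by
  have hN0 : N ≠ 0 := by omega
  have : NeZero N := ⟨hN0⟩
  have hωN : IsPrimitiveRoot ω N := by
    rw [hω, neg_mul, neg_mul, neg_div, Complex.exp_neg]
    exact (Complex.isPrimitiveRoot_exp N hN0).inv
  have hζN : (ω ^ y) ^ N = 1 := by
    rw [← zpow_natCast, ← zpow_mul, mul_comm, zpow_mul, zpow_natCast, hωN.pow_eq_one, one_zpow]
  have hζ : ∀ m : ℤ, m ≠ 0 → |m| ≤ 2 → (ω ^ y) ^ m ≠ 1 := by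
    intro m hm0 hm2 h
    rw [← zpow_mul, hωN.zpow_eq_one_iff_dvd] at h
    obtain ⟨hm2l, hm2u⟩ := abs_le.1 hm2
    interval_cases m
    all_goals first
      | exact hm0 rfl
      | exact hy (by simpa using h)
      | exact hy2 (by simpa [mul_comm] using h)
  have hu : ‖ω ^ (s * y)‖ = 1 := by
    rw [norm_zpow, Complex.norm_eq_one_of_pow_eq_one hωN.pow_eq_one hN0, one_zpow]
  have hsum : ∀ z : Fin L → Fin N, ∑ j, ω ^ (((z j : ℕ) : ℤ) * y) = powerSum (ω ^ y) z :=
    fun z => sum_congr rfl fun j _ => by rw [mul_comm, zpow_mul, zpow_natCast]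
  simp only [hsum]
  exact variance_norm_sq_add_powerSum hζN hζ hu a b
end

section
/- Let N ≥ 1 and L ≥ 0 be integers, let ω = exp(−2πi/N), let y be an integer with N ∤ y and N ∤ 2·y, and let a, b, c be real numbers. Then the variance over all N^L tuples (z_1,…,z_L) with each z_j ∈ {0,1,…,N−1} of the random quantity X = |a + i·c + b·∑_{j=1}^{L} ω^{z_j·y}|² equals b⁴·(L² − L) + 2·(a² + c²)·b²·L. -/
open Real Complex

/-! With `ζ = ω ^ y`, the quantity `S = ∑ⱼ ζ ^ zⱼ` is a sum of `L` independent steps, each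
uniform on the `N`-th powers of `ζ`; since `ζ ≠ 1` and `ζ ^ 2 ≠ 1`, a step `t` has `E t = E t² = 0`
and `|t| = 1`. All mixed moments `E[S^p S̄^q]` with `p + q ≤ 4` then follow by induction on `L`,
the only nonzero ones being `E|S|² = L` and `E|S|⁴ = 2L² - L`. Expanding `|u + bS|²` and its
square in `S` and `S̄` gives the mean `|u|² + b²L` and second moment
`|u|⁴ + 4|u|²b²L + b⁴(2L² - L)`, whose difference is the claimed variance. -/

open Finset ComplexConjugate

/-- The low moments of a sum of `L` independent unimodular steps `t` with `E t = E t² = 0`,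
written as sums over the (uniform) sample space. -/
structure HasWalkMoments {Ω : Type*} [Fintype Ω] (S : Ω → ℂ) (L : ℕ) : Prop where
  sum_eq_zero : ∑ ω, S ω = 0
  sum_sq_eq_zero : ∑ ω, S ω ^ 2 = 0
  sum_mul_conj : ∑ ω, S ω * conj (S ω) = L * Fintype.card Ω
  sum_sq_mul_conj_eq_zero : ∑ ω, S ω ^ 2 * conj (S ω) = 0
  sum_sq_mul_conj_sq : ∑ ω, S ω ^ 2 * conj (S ω) ^ 2 = (2 * L ^ 2 - L) * Fintype.card Ω

namespace HasWalkMoments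

variable {Ω Ω' : Type*} [Fintype Ω] [Fintype Ω'] {S : Ω → ℂ} {T : Ω' → ℂ} {L M : ℕ}

lemma sum_conj_eq_zero (h : HasWalkMoments S L) : ∑ ω, conj (S ω) = 0 := by
  rw [← map_sum, h.sum_eq_zero, map_zero]

lemma sum_conj_sq_eq_zero (h : HasWalkMoments S L) : ∑ ω, conj (S ω) ^ 2 = 0 := by
  simp_rw [← map_pow, ← map_sum, h.sum_sq_eq_zero, map_zero]

lemma sum_mul_conj_sq_eq_zero (h : HasWalkMoments S L) : ∑ ω, S ω * conj (S ω) ^ 2 = 0 := by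
  simpa [map_sum, mul_comm] using congrArg conj h.sum_sq_mul_conj_eq_zero

lemma sum_affine (h : HasWalkMoments S L) (a b : ℂ) :
    ∑ ω, (a + b * S ω) = a * Fintype.card Ω := by
  simp [sum_add_distrib, ← mul_sum, h.sum_eq_zero, mul_comm]

lemma sum_affine_sq (h : HasWalkMoments S L) (a b : ℂ) :
    ∑ ω, (a + b * S ω) ^ 2 = a ^ 2 * Fintype.card Ω := by
  simp only [add_sq, sum_add_distrib, mul_pow, ← mul_sum, mul_assoc, h.sum_eq_zero,
    h.sum_sq_eq_zero]
  simp [mul_comm]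

lemma sum_affine_mul_conj (h : HasWalkMoments S L) (a b : ℂ) :
    ∑ ω, (a + b * S ω) * conj (a + b * S ω) = (a * conj a + b * conj b * L) * Fintype.card Ω := by
  have expand : ∀ ω, (a + b * S ω) * conj (a + b * S ω) = a * conj a + a * conj b * conj (S ω)
      + conj a * b * S ω + b * conj b * (S ω * conj (S ω)) := fun ω => by
    simp only [map_add, map_mul]; ring
  simp only [expand, sum_add_distrib, ← mul_sum, h.sum_eq_zero, h.sum_conj_eq_zero, h.sum_mul_conj,
    sum_const, card_univ, nsmul_eq_mul, mul_zero, add_zero]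
  ring

lemma sum_affine_sq_mul_conj (h : HasWalkMoments S L) (a b : ℂ) :
    ∑ ω, (a + b * S ω) ^ 2 * conj (a + b * S ω)
      = (a ^ 2 * conj a + a * (2 * b * conj b * L)) * Fintype.card Ω := by
  have expand : ∀ ω, (a + b * S ω) ^ 2 * conj (a + b * S ω) = a ^ 2 * conj a
      + a ^ 2 * conj b * conj (S ω) + 2 * a * conj a * b * S ω
      + 2 * a * b * conj b * (S ω * conj (S ω)) + conj a * b ^ 2 * S ω ^ 2
      + b ^ 2 * conj b * (S ω ^ 2 * conj (S ω)) := fun ω => by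
    simp only [map_add, map_mul]; ring
  simp only [expand, sum_add_distrib, ← mul_sum, h.sum_eq_zero, h.sum_conj_eq_zero,
    h.sum_mul_conj, h.sum_sq_eq_zero, h.sum_sq_mul_conj_eq_zero, sum_const, card_univ, nsmul_eq_mul,
    mul_zero, add_zero]
  ring

lemma sum_affine_sq_mul_conj_sq (h : HasWalkMoments S L) (a b : ℂ) :
    ∑ ω, (a + b * S ω) ^ 2 * conj (a + b * S ω) ^ 2
      = (a ^ 2 * conj a ^ 2 + a * conj a * (4 * b * conj b * L)
          + b ^ 2 * conj b ^ 2 * (2 * L ^ 2 - L)) * Fintype.card Ω := by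
  have expand : ∀ ω, (a + b * S ω) ^ 2 * conj (a + b * S ω) ^ 2 = a ^ 2 * conj a ^ 2
      + 2 * a ^ 2 * conj a * conj b * conj (S ω) + a ^ 2 * conj b ^ 2 * conj (S ω) ^ 2
      + 2 * a * conj a ^ 2 * b * S ω + 4 * a * conj a * b * conj b * (S ω * conj (S ω))
      + 2 * a * b * conj b ^ 2 * (S ω * conj (S ω) ^ 2) + conj a ^ 2 * b ^ 2 * S ω ^ 2
      + 2 * conj a * b ^ 2 * conj b * (S ω ^ 2 * conj (S ω))
      + b ^ 2 * conj b ^ 2 * (S ω ^ 2 * conj (S ω) ^ 2) := fun ω => by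
    simp only [map_add, map_mul]; ring
  simp only [expand, sum_add_distrib, ← mul_sum, h.sum_eq_zero, h.sum_conj_eq_zero,
    h.sum_mul_conj, h.sum_sq_eq_zero, h.sum_conj_sq_eq_zero, h.sum_sq_mul_conj_eq_zero,
    h.sum_mul_conj_sq_eq_zero, h.sum_sq_mul_conj_sq, sum_const, card_univ, nsmul_eq_mul,
    mul_zero, add_zero]
  ring

lemma add (hS : HasWalkMoments S L) (hT : HasWalkMoments T M) :
    HasWalkMoments (fun p : Ω × Ω' => S p.1 + T p.2) (L + M) := by
  have h₁ := fun a => hT.sum_affine a 1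
  have h₂ := fun a => hT.sum_affine_sq a 1
  have h₃ := fun a => hT.sum_affine_mul_conj a 1
  have h₄ := fun a => hT.sum_affine_sq_mul_conj a 1
  have h₅ := fun a => hT.sum_affine_sq_mul_conj_sq a 1
  simp only [one_mul, map_one, one_pow, mul_one] at h₁ h₂ h₃ h₄ h₅
  constructor <;>
  simp only [Fintype.sum_prod_type, h₁, h₂, h₃, h₄, h₅] <;>
  simp only [← sum_mul, sum_add_distrib, sum_const, card_univ, nsmul_eq_mul, Fintype.card_prod,
    hS.sum_eq_zero, hS.sum_sq_eq_zero, hS.sum_mul_conj, hS.sum_sq_mul_conj_eq_zero,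
    hS.sum_sq_mul_conj_sq] <;>
  push_cast <;> ring

lemma comp_equiv (h : HasWalkMoments S L) (e : Ω' ≃ Ω) : HasWalkMoments (S ∘ e) L where
  sum_eq_zero := (e.sum_comp S).trans h.sum_eq_zero
  sum_sq_eq_zero := (e.sum_comp fun ω => S ω ^ 2).trans h.sum_sq_eq_zero
  sum_mul_conj := by
    rw [Fintype.card_congr e]; exact (e.sum_comp fun ω => S ω * conj (S ω)).trans h.sum_mul_conj
  sum_sq_mul_conj_eq_zero :=
    (e.sum_comp fun ω => S ω ^ 2 * conj (S ω)).trans h.sum_sq_mul_conj_eq_zero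
  sum_sq_mul_conj_sq := by
    rw [Fintype.card_congr e]
    exact (e.sum_comp fun ω => S ω ^ 2 * conj (S ω) ^ 2).trans h.sum_sq_mul_conj_sq

lemma of_mul_conj_eq_one (h₁ : ∑ ω, S ω = 0) (h₂ : ∑ ω, S ω ^ 2 = 0)
    (hS : ∀ ω, S ω * conj (S ω) = 1) : HasWalkMoments S 1 where
  sum_eq_zero := h₁
  sum_sq_eq_zero := h₂
  sum_mul_conj := by simp [hS]
  sum_sq_mul_conj_eq_zero := by simp [pow_two, mul_assoc, hS, h₁]
  sum_sq_mul_conj_sq := by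
    simp only [← mul_pow, hS, one_pow, sum_const, card_univ, nsmul_eq_mul, mul_one, Nat.cast_one]
    norm_num

lemma variance_norm_sq_affine [Nonempty Ω] (h : HasWalkMoments S L) (u : ℂ) (b : ℝ) :
    (1 / (Fintype.card Ω : ℝ)) * ∑ ω, (‖u + b * S ω‖ ^ 2) ^ 2
      - ((1 / (Fintype.card Ω : ℝ)) * ∑ ω, ‖u + b * S ω‖ ^ 2) ^ 2
      = b ^ 4 * ((L : ℝ) ^ 2 - L) + 2 * ‖u‖ ^ 2 * b ^ 2 * L := by
  have hmean : ∑ ω, ‖u + b * S ω‖ ^ 2 = (‖u‖ ^ 2 + b ^ 2 * L) * Fintype.card Ω := by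
    apply ofReal_injective
    push_cast
    simp only [← mul_conj', h.sum_affine_mul_conj]
    rw [conj_ofReal, mul_conj']
    ring
  have hsecond : ∑ ω, (‖u + b * S ω‖ ^ 2) ^ 2
      = (‖u‖ ^ 4 + 4 * ‖u‖ ^ 2 * b ^ 2 * L + b ^ 4 * (2 * L ^ 2 - L)) * Fintype.card Ω := by
    apply ofReal_injective
    push_cast
    simp only [← mul_conj', mul_pow, h.sum_affine_sq_mul_conj_sq]
    rw [conj_ofReal]
    linear_combination (u * conj u + ‖u‖ ^ 2) * Fintype.card Ω * mul_conj' u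
  have hn : (Fintype.card Ω : ℝ) ≠ 0 := by positivity
  rw [hmean, hsecond]
  field_simp
  ring

end HasWalkMoments

lemma hasWalkMoments_sum_fin {Ω : Type*} [Fintype Ω] {τ : Ω → ℂ} (hτ : HasWalkMoments τ 1) :
    ∀ L : ℕ, HasWalkMoments (fun z : Fin L → Ω => ∑ j, τ (z j)) L
  | 0 => by constructor <;> simp
  | L + 1 => by
    have h := ((hτ.add (hasWalkMoments_sum_fin hτ L)).comp_equiv (Fin.consEquiv fun _ => Ω).symm)
    rw [add_comm 1 L] at h
    convert h using 2 with z
    simp [Fin.sum_univ_succ, Fin.consEquiv, Fin.tail]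

lemma sum_fin_pow_eq_zero {K : Type*} [DivisionRing K] {N : ℕ} {ζ : K} (hN : ζ ^ N = 1)
    (h₁ : ζ ≠ 1) : ∑ x : Fin N, ζ ^ (x : ℕ) = 0 := by
  rw [Fin.sum_univ_eq_sum_range, geom_sum_eq h₁, hN, sub_self, zero_div]

lemma hasWalkMoments_pow {N : ℕ} {ζ : ℂ} (hN : ζ ^ N = 1) (h₁ : ζ ≠ 1) (h₂ : ζ ^ 2 ≠ 1) :
    HasWalkMoments (fun x : Fin N => ζ ^ (x : ℕ)) 1 := by
  refine .of_mul_conj_eq_one (sum_fin_pow_eq_zero hN h₁) ?_ fun x => ?_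
  · simp_rw [← pow_mul, mul_comm _ 2, pow_mul]
    exact sum_fin_pow_eq_zero (by rw [← pow_mul, mul_comm, pow_mul, hN, one_pow]) h₂
  · rw [mul_conj', norm_pow, norm_eq_one_of_pow_eq_one hN x.pos.ne', one_pow]
    norm_num

theorem stmt_12 (N : ℕ) (hN : 1 ≤ N) (L : ℕ)
    (ω : ℂ) (hω : ω = Complex.exp (-2 * Real.pi * Complex.I / N))
    (y : ℤ) (hy : ¬ (N : ℤ) ∣ y) (hy2 : ¬ (N : ℤ) ∣ 2 * y)
    (a b c : ℝ) :
    (1 / (N : ℝ) ^ L) * (∑ z : Fin L → Fin N,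
        (‖((a : ℂ) + Complex.I * (c : ℂ)
            + (b : ℂ) * ∑ j : Fin L, ω ^ (((z j : ℕ) : ℤ) * y))‖ ^ 2) ^ 2)
      - ((1 / (N : ℝ) ^ L) * ∑ z : Fin L → Fin N,
          ‖((a : ℂ) + Complex.I * (c : ℂ)
            + (b : ℂ) * ∑ j : Fin L, ω ^ (((z j : ℕ) : ℤ) * y))‖ ^ 2) ^ 2
      = b ^ 4 * ((L : ℝ) ^ 2 - L) + 2 * (a ^ 2 + c ^ 2) * b ^ 2 * L := by
  have hprim : IsPrimitiveRoot ω N := by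
    rw [hω, neg_mul, neg_mul, neg_div, Complex.exp_neg]
    exact (isPrimitiveRoot_exp N (by omega)).inv
  have hζN : (ω ^ y) ^ N = 1 := by
    rw [← zpow_natCast, ← zpow_mul, hprim.zpow_eq_one_iff_dvd]
    exact dvd_mul_left _ _
  have hζ₁ : ω ^ y ≠ 1 := mt (hprim.zpow_eq_one_iff_dvd y).mp hy
  have hζ₂ : (ω ^ y) ^ 2 ≠ 1 := by
    rw [← zpow_natCast, ← zpow_mul, mul_comm]
    exact mt (hprim.zpow_eq_one_iff_dvd _).mp hy2
  have hterm (x : Fin N) : ω ^ (((x : ℕ) : ℤ) * y) = (ω ^ y) ^ (x : ℕ) := by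
    rw [mul_comm, zpow_mul, zpow_natCast]
  have : Nonempty (Fin N) := ⟨⟨0, hN⟩⟩
  have hvar := (hasWalkMoments_sum_fin (hasWalkMoments_pow hζN hζ₁ hζ₂) L).variance_norm_sq_affine
    (a + I * c) b
  have hu : ‖(a : ℂ) + I * c‖ ^ 2 = a ^ 2 + c ^ 2 := by
    rw [Complex.sq_norm, mul_comm, normSq_add_mul_I]
  simp only [hterm]
  rwa [Fintype.card_fun, Fintype.card_fin, Fintype.card_fin, Nat.cast_pow, hu] at hvar
end

section
/- Let M ≥ 2 be an integer and N > 0 a real number, and define f(L) = (L + M²)/((N − (L + M))·(L + M)) for real L in the open interval (−M, N − M). Let L₀ = −M² + √(M·(M−1)·(M·(M−1) + N)), and assume L₀ < N − M. Then L₀ ∈ (−M, N − M) and for every L ∈ (−M, N − M) one has f(L₀) ≤ f(L); that is, f attains its minimum over (−M, N − M) at L₀. -/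
/-!
Substituting `x = L + M` and `a = M(M-1)` turns `f` into `x ↦ (x + a) / ((N - x) x)` on `(0, N)`,
and `L₀ + M` into `x₀ = √(a(a + N)) - a`, the positive root of `x² + 2ax - aN`. Clearing
denominators, `(x + a)(N - x₀)x₀ - (x₀ + a)(N - x)x` equals
`(x₀ + a)(x - x₀)² + (x - x₀)(x₀² + 2ax₀ - aN)`; the second term vanishes and `x₀ + a ≥ 0`.
-/

open Real

noncomputable def criticalPoint (a N : ℝ) : ℝ := √(a * (a + N)) - a

section criticalPoint

variable {a N : ℝ}

lemma criticalPoint_add_self : criticalPoint a N + a = √(a * (a + N)) := by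
  simp only [criticalPoint, sub_add_cancel]

lemma criticalPoint_sq_add (ha : 0 ≤ a) (hN : 0 ≤ N) :
    criticalPoint a N ^ 2 + 2 * a * criticalPoint a N = a * N := by
  have hs : √(a * (a + N)) ^ 2 = a * (a + N) := sq_sqrt (by positivity)
  simp only [criticalPoint]
  linear_combination hs

lemma criticalPoint_pos (ha : 0 < a) (hN : 0 < N) : 0 < criticalPoint a N := by
  rw [criticalPoint, sub_pos]
  exact lt_sqrt_of_sq_lt (by nlinarith)

lemma criticalPoint_lt (ha : 0 ≤ a) (hN : 0 < N) : criticalPoint a N < N := by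
  rw [criticalPoint, sub_lt_iff_lt_add]
  exact (sqrt_lt' (by linarith)).2 (by nlinarith)

end criticalPoint

lemma div_le_div_of_sq_add_eq {a N x₀ x : ℝ} (hx₀ : x₀ ∈ Set.Ioo 0 N) (hx : x ∈ Set.Ioo 0 N)
    (hquad : x₀ ^ 2 + 2 * a * x₀ = a * N) (ha : 0 ≤ x₀ + a) :
    (x₀ + a) / ((N - x₀) * x₀) ≤ (x + a) / ((N - x) * x) := by
  obtain ⟨hx₀0, hx₀N⟩ := hx₀
  obtain ⟨hx0, hxN⟩ := hx
  rw [div_le_div_iff₀ (mul_pos (by linarith) hx₀0) (mul_pos (by linarith) hx0)]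
  have key : (x + a) * ((N - x₀) * x₀) - (x₀ + a) * ((N - x) * x) = (x₀ + a) * (x - x₀) ^ 2 := by
    linear_combination (x - x₀) * hquad
  nlinarith [mul_nonneg ha (sq_nonneg (x - x₀))]

theorem stmt_13_general (M : ℕ) (hM : 2 ≤ M) (N : ℝ) (hN : 0 < N)
    (f : ℝ → ℝ)
    (hf : ∀ L : ℝ, f L = (L + (M : ℝ) ^ 2) / ((N - (L + M)) * (L + M)))
    (L₀ : ℝ)
    (hL₀ : L₀ = -(M : ℝ) ^ 2 + Real.sqrt ((M : ℝ) * (M - 1) * ((M : ℝ) * (M - 1) + N))) :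
    L₀ ∈ Set.Ioo (-(M : ℝ)) (N - M)
    ∧ ∀ L ∈ Set.Ioo (-(M : ℝ)) (N - M), f L₀ ≤ f L := by
  set a : ℝ := M * (M - 1) with ha_def
  have ha : 0 < a := by
    have hM2 : (2 : ℝ) ≤ M := by exact_mod_cast hM
    exact mul_pos (by linarith) (by linarith)
  have hx₀ : L₀ + M = criticalPoint a N := by rw [hL₀, criticalPoint]; ring
  have hshift : ∀ L : ℝ, f L = (L + M + a) / ((N - (L + M)) * (L + M)) := fun L => by
    rw [hf, ha_def]; ring
  have hmem : L₀ + M ∈ Set.Ioo 0 N := hx₀ ▸ ⟨criticalPoint_pos ha hN, criticalPoint_lt ha.le hN⟩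
  refine ⟨⟨by linarith [hmem.1], by linarith [hmem.2]⟩, fun L hL => ?_⟩
  rw [hshift, hshift]
  refine div_le_div_of_sq_add_eq hmem ⟨by linarith [hL.1], by linarith [hL.2]⟩ ?_ ?_
  · rw [hx₀]; exact criticalPoint_sq_add ha.le hN.le
  · rw [hx₀, criticalPoint_add_self]; exact sqrt_nonneg _

theorem stmt_13 (M : ℕ) (hM : 2 ≤ M) (N : ℝ) (hN : 0 < N)
    (f : ℝ → ℝ)
    (hf : ∀ L : ℝ, f L = (L + (M : ℝ) ^ 2) / ((N - (L + M)) * (L + M)))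
    (L₀ : ℝ)
    (hL₀ : L₀ = -(M : ℝ) ^ 2 + Real.sqrt ((M : ℝ) * (M - 1) * ((M : ℝ) * (M - 1) + N)))
    (hlt : L₀ < N - M) :
    L₀ ∈ Set.Ioo (-(M : ℝ)) (N - M)
    ∧ ∀ L ∈ Set.Ioo (-(M : ℝ)) (N - M), f L₀ ≤ f L :=
  stmt_13_general M hM N hN f hf L₀ hL₀
end

section
/- Let N ≥ 1, let x : {0,…,N−1} → ℂ be not identically zero, let T be the number of indices j with x_j ≠ 0, and define the discrete Fourier transform y_k = (1/√N)·∑_{j=0}^{N−1} x_j·exp(−2πi·j·k/N) for k = 0,…,N−1. Then y cannot have T consecutive zeros cyclically: for every t ∈ {0,…,N−1} there exists r with 0 ≤ r < T such that y_{(t+r) mod N} ≠ 0. -/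
/-!
If `y` had `T` cyclically consecutive zeros `y_t, …, y_{t+T-1}`, then with `ω = exp(-2πi/N)` the
`T` coefficients `x_j ω^{jt}` (`j` in the support of `x`) would be annihilated by the
`T × T` Vandermonde matrix with the distinct nodes `ω^j`, which is invertible; so `x = 0`.
-/

open Real Complex

theorem Finset.eq_zero_of_forall_sum_mul_pow_eq_zero {R ι : Type*} [CommRing R] [IsDomain R]
    (s : Finset ι) {c f : ι → R} (hf : Set.InjOn f s)
    (h : ∀ r < s.card, ∑ j ∈ s, c j * f j ^ r = 0) : ∀ j ∈ s, c j = 0 := by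
  let e := s.equivFin
  have hnodes : Function.Injective fun i => f (e.symm i) := fun a b hab =>
    e.symm.injective (Subtype.ext (hf (e.symm a).2 (e.symm b).2 hab))
  have hcoeff : (fun i => c (e.symm i)) = 0 :=
    Matrix.eq_zero_of_forall_pow_sum_mul_pow_eq_zero hnodes fun r => by
      rw [e.symm.sum_comp (fun j : s => c j * f j ^ (r : ℕ)),
        s.sum_coe_sort (fun j => c j * f j ^ (r : ℕ))]
      exact h r r.isLt
  intro j hj
  simpa [e] using congrFun hcoeff (e ⟨j, hj⟩)

theorem Complex.isPrimitiveRoot_exp_neg (N : ℕ) (hN : N ≠ 0) :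
    IsPrimitiveRoot (cexp (-2 * π * I / N)) N := by
  have hinv : cexp (-2 * π * I / N) = (cexp (2 * π * I / N))⁻¹ := by
    rw [← exp_neg]
    ring_nf
  exact hinv ▸ (isPrimitiveRoot_exp N hN).inv

theorem Complex.exp_neg_two_pi_I_mul_mod_div (N : ℕ) (hN : N ≠ 0) (j k : ℕ) :
    cexp (-2 * π * I * j * ((k % N : ℕ) : ℂ) / N) = (cexp (-2 * π * I / N) ^ j) ^ k := by
  have hperiod : (cexp (-2 * π * I / N) ^ j) ^ N = 1 := by
    rw [← pow_mul, pow_mul', (isPrimitiveRoot_exp_neg N hN).pow_eq_one, one_pow]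
  rw [pow_eq_pow_mod k hperiod, ← pow_mul, ← exp_nat_mul]
  congr 1
  push_cast
  ring

theorem stmt_14 (N : ℕ) (hN : 1 ≤ N) (x : Fin N → ℂ) (hx : x ≠ 0)
    (T : ℕ) (hT : T = (Finset.univ.filter fun j : Fin N => x j ≠ 0).card)
    (y : Fin N → ℂ)
    (hy : ∀ k : Fin N, y k = (1 / (Real.sqrt N : ℂ)) *
        ∑ j : Fin N, x j * Complex.exp (-2 * Real.pi * Complex.I * (j : ℕ) * (k : ℕ) / N)) :
    ∀ t : Fin N, ∃ r : ℕ, r < T ∧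
      y ⟨((t : ℕ) + r) % N, Nat.mod_lt _ hN⟩ ≠ 0 := by
  intro t
  by_contra! hzero
  have hN0 : N ≠ 0 := by omega
  set ω := cexp (-2 * π * I / N)
  set S := Finset.univ.filter fun j : Fin N => x j ≠ 0
  have hnodes : Set.InjOn (fun j : Fin N => ω ^ (j : ℕ)) S := fun a _ b _ hab =>
    Fin.ext ((isPrimitiveRoot_exp_neg N hN0).pow_inj a.isLt b.isLt hab)
  have hsum : ∀ r < S.card, ∑ j ∈ S, (x j * (ω ^ (j : ℕ)) ^ (t : ℕ)) * (ω ^ (j : ℕ)) ^ r = 0 := by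
    intro r hr
    have hyr := hzero r (hT ▸ hr)
    rw [hy, mul_eq_zero, one_div, inv_eq_zero, ofReal_eq_zero,
      Real.sqrt_eq_zero (Nat.cast_nonneg N), Nat.cast_eq_zero] at hyr
    rw [← hyr.resolve_left hN0]
    refine (Finset.sum_congr rfl fun j _ => ?_).trans
      (Finset.sum_filter_of_ne fun j _ hsummand hxj => hsummand (by rw [hxj, zero_mul]))
    rw [Fin.val_mk, exp_neg_two_pi_I_mul_mod_div N hN0, pow_add]
    ring
  obtain ⟨j, hj⟩ := Function.ne_iff.mp hx
  have hjS : j ∈ S := Finset.mem_filter.mpr ⟨Finset.mem_univ j, hj⟩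
  have hcoeff := S.eq_zero_of_forall_sum_mul_pow_eq_zero hnodes hsum j hjS
  exact hj ((mul_eq_zero.mp hcoeff).resolve_right (pow_ne_zero _ (pow_ne_zero _ (exp_ne_zero _))))
end

section
/- Let N ≥ 1 and let x : {0,…,N−1} → ℂ be not identically zero, with discrete Fourier transform y_k = (1/√N)·∑_{j=0}^{N−1} x_j·exp(−2πi·j·k/N). Let N_x be the number of indices j with x_j ≠ 0 and N_y be the number of indices k with y_k ≠ 0. Then N_x·N_y ≥ N. -/
/-! Both the transform and its inverse have unimodular kernels and the factor `1/√N`, so each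
of `‖y‖∞ ≤ N_x ‖x‖∞ / √N` and `‖x‖∞ ≤ N_y ‖y‖∞ / √N` follows from the triangle inequality over
the support. Chaining them gives `‖x‖∞ ≤ (N_x N_y / N) ‖x‖∞` with `‖x‖∞ > 0`. -/

open Real Complex Finset

section SupportUncertainty

variable {ι κ : Type*} [Fintype ι] [Fintype κ]

lemma norm_sum_mul_le_card_support_mul_norm (f e : ι → ℂ) (he : ∀ i, ‖e i‖ ≤ 1) :
    ‖∑ i, f i * e i‖ ≤ #{i | f i ≠ 0} * ‖f‖ := by
  calc ‖∑ i, f i * e i‖ ≤ ∑ i, ‖f i‖ := by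
        refine (norm_sum_le _ _).trans (sum_le_sum fun i _ => ?_)
        rw [norm_mul]
        exact mul_le_of_le_one_right (norm_nonneg _) (he i)
    _ = ∑ i ∈ {i | f i ≠ 0}, ‖f i‖ :=
        (sum_subset (subset_univ _) fun i _ hi => by simp_all).symm
    _ ≤ #{i | f i ≠ 0} • ‖f‖ := sum_le_card_nsmul _ _ _ fun i _ => norm_le_pi_norm f i
    _ = #{i | f i ≠ 0} * ‖f‖ := nsmul_eq_mul _ _

lemma norm_le_of_eq_mul_sum_mul_kernel (x : ι → ℂ) (y : κ → ℂ) (c : ℂ) (K : ι → κ → ℂ)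
    (hK : ∀ j k, ‖K j k‖ ≤ 1) (hy : ∀ k, y k = c * ∑ j, x j * K j k) :
    ‖y‖ ≤ ‖c‖ * #{j | x j ≠ 0} * ‖x‖ := by
  refine (pi_norm_le_iff_of_nonneg (by positivity)).2 fun k => ?_
  rw [hy k, norm_mul, mul_assoc]
  gcongr
  exact norm_sum_mul_le_card_support_mul_norm x (K · k) (hK · k)

theorem one_le_mul_card_support_mul_card_support (x : ι → ℂ) (y : κ → ℂ) (hx : x ≠ 0)
    (c c' : ℂ) (K : ι → κ → ℂ) (K' : κ → ι → ℂ)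
    (hK : ∀ j k, ‖K j k‖ ≤ 1) (hK' : ∀ k j, ‖K' k j‖ ≤ 1)
    (hy : ∀ k, y k = c * ∑ j, x j * K j k) (hxy : ∀ j, x j = c' * ∑ k, y k * K' k j) :
    1 ≤ ‖c‖ * ‖c'‖ * (#{j | x j ≠ 0} * #{k | y k ≠ 0}) := by
  have hy_le := norm_le_of_eq_mul_sum_mul_kernel x y c K hK hy
  have hx_le := norm_le_of_eq_mul_sum_mul_kernel y x c' K' hK' hxy
  have hx_pos : 0 < ‖x‖ := norm_pos_iff.2 hx
  have : ‖x‖ ≤ ‖c‖ * ‖c'‖ * (#{j | x j ≠ 0} * #{k | y k ≠ 0}) * ‖x‖ :=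
    calc ‖x‖ ≤ ‖c'‖ * #{k | y k ≠ 0} * ‖y‖ := hx_le
      _ ≤ ‖c'‖ * #{k | y k ≠ 0} * (‖c‖ * #{j | x j ≠ 0} * ‖x‖) :=
          mul_le_mul_of_nonneg_left hy_le (mul_nonneg (norm_nonneg _) (Nat.cast_nonneg _))
      _ = _ := by ring
  exact (le_mul_iff_one_le_left hx_pos).1 this

end SupportUncertainty

lemma IsPrimitiveRoot.sum_range_zpow_pow {K : Type*} [Field K] {ζ : K} {N : ℕ}
    (hζ : IsPrimitiveRoot ζ N) (m : ℤ) :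
    ∑ k ∈ range N, (ζ ^ m) ^ k = if (N : ℤ) ∣ m then (N : K) else 0 := by
  split_ifs with hm
  · simp [(hζ.zpow_eq_one_iff_dvd m).2 hm]
  · have hr : ζ ^ m - 1 ≠ 0 := sub_ne_zero.2 fun h => hm ((hζ.zpow_eq_one_iff_dvd m).1 h)
    have hrN : (ζ ^ m) ^ N = 1 := by
      rw [← zpow_natCast, ← zpow_mul, mul_comm, zpow_mul, zpow_natCast, hζ.pow_eq_one, one_zpow]
    have := geom_sum_mul (ζ ^ m) N
    rw [hrN, sub_self] at this
    exact (mul_eq_zero.1 this).resolve_right hr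

lemma sum_exp_neg_mul_exp_mul {N : ℕ} (hN : N ≠ 0) (j j' : Fin N) :
    ∑ k : Fin N, exp (-2 * π * I * (j' : ℕ) * (k : ℕ) / N) * exp (2 * π * I * (j : ℕ) * (k : ℕ) / N)
      = if j' = j then (N : ℂ) else 0 := by
  set ζ := exp (2 * π * I / N)
  have hterm : ∀ k : Fin N, exp (-2 * π * I * (j' : ℕ) * (k : ℕ) / N) *
      exp (2 * π * I * (j : ℕ) * (k : ℕ) / N) = (ζ ^ ((j : ℤ) - j')) ^ (k : ℕ) := by
    intro k
    rw [← Complex.exp_add, ← zpow_natCast, ← zpow_mul, ← exp_int_mul]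
    congr 1
    push_cast
    ring
  rw [sum_congr rfl fun k _ => hterm k, Fin.sum_univ_eq_sum_range (fun k => (ζ ^ _) ^ k),
    (isPrimitiveRoot_exp N hN).sum_range_zpow_pow]
  congr 1
  refine propext ⟨fun h => ?_, fun h => by simp [h]⟩
  have := Int.eq_zero_of_abs_lt_dvd h (by have := j.isLt; have := j'.isLt; rw [abs_lt]; omega)
  exact Fin.ext (by omega)

lemma dft_inversion {N : ℕ} (hN : N ≠ 0) (x y : Fin N → ℂ)
    (hy : ∀ k : Fin N, y k = (1 / (Real.sqrt N : ℂ)) *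
        ∑ j : Fin N, x j * exp (-2 * π * I * (j : ℕ) * (k : ℕ) / N))
    (j : Fin N) :
    x j = (1 / (Real.sqrt N : ℂ)) *
      ∑ k : Fin N, y k * exp (2 * π * I * (j : ℕ) * (k : ℕ) / N) := by
  have hsqrt : (Real.sqrt N : ℂ) ^ 2 = N := by
    rw [← ofReal_pow, Real.sq_sqrt (Nat.cast_nonneg N), ofReal_natCast]
  have hsqrt_ne : (Real.sqrt N : ℂ) ≠ 0 :=
    ofReal_ne_zero.2 (Real.sqrt_ne_zero'.2 (Nat.cast_pos.2 (Nat.pos_of_ne_zero hN)))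
  have hswap : ∑ k : Fin N, y k * exp (2 * π * I * (j : ℕ) * (k : ℕ) / N) =
      1 / (Real.sqrt N : ℂ) * ∑ j' : Fin N, x j' * ∑ k : Fin N,
        exp (-2 * π * I * (j' : ℕ) * (k : ℕ) / N) * exp (2 * π * I * (j : ℕ) * (k : ℕ) / N) := by
    simp only [hy, sum_mul, mul_sum]
    rw [sum_comm]
    exact sum_congr rfl fun _ _ => sum_congr rfl fun _ _ => by ring
  rw [hswap]
  simp only [sum_exp_neg_mul_exp_mul hN, mul_ite, mul_zero, sum_ite_eq', mem_univ, if_true]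
  field_simp
  rw [hsqrt]

theorem stmt_15_general (N : ℕ) (x : Fin N → ℂ) (hx : x ≠ 0)
    (y : Fin N → ℂ)
    (hy : ∀ k : Fin N, y k = (1 / (Real.sqrt N : ℂ)) *
        ∑ j : Fin N, x j * Complex.exp (-2 * Real.pi * Complex.I * (j : ℕ) * (k : ℕ) / N))
    (Nx Ny : ℕ)
    (hNx : Nx = (Finset.univ.filter fun j : Fin N => x j ≠ 0).card)
    (hNy : Ny = (Finset.univ.filter fun k : Fin N => y k ≠ 0).card) :
    N ≤ Nx * Ny := by
  have hN0 : N ≠ 0 := by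
    obtain ⟨j, -⟩ := Function.ne_iff.1 hx
    exact j.pos.ne'
  have key := one_le_mul_card_support_mul_card_support x y hx _ _
    (fun j k => exp (-2 * π * I * (j : ℕ) * (k : ℕ) / N))
    (fun k j => exp (2 * π * I * (j : ℕ) * (k : ℕ) / N))
    (fun j k => by simp [norm_exp]) (fun k j => by simp [norm_exp]) hy (dft_inversion hN0 x y hy)
  have hnorm : ‖(1 / (Real.sqrt N : ℂ))‖ * ‖(1 / (Real.sqrt N : ℂ))‖ = 1 / N := by
    rw [← norm_mul, one_div_mul_one_div, ← ofReal_mul, Real.mul_self_sqrt (Nat.cast_nonneg N)]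
    simp
  rw [hnorm, ← hNx, ← hNy, one_div_mul_eq_div,
    one_le_div (by positivity)] at key
  exact_mod_cast key

theorem stmt_15 (N : ℕ) (hN : 1 ≤ N) (x : Fin N → ℂ) (hx : x ≠ 0)
    (y : Fin N → ℂ)
    (hy : ∀ k : Fin N, y k = (1 / (Real.sqrt N : ℂ)) *
        ∑ j : Fin N, x j * Complex.exp (-2 * Real.pi * Complex.I * (j : ℕ) * (k : ℕ) / N))
    (Nx Ny : ℕ)
    (hNx : Nx = (Finset.univ.filter fun j : Fin N => x j ≠ 0).card)
    (hNy : Ny = (Finset.univ.filter fun k : Fin N => y k ≠ 0).card) :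
    N ≤ Nx * Ny :=
  stmt_15_general N x hx y hy Nx Ny hNx hNy
end

section
/- Let N ≥ 1, let A be a subset of {0,…,N−1} with |A| = M ≥ 1, let a, b be complex numbers with a ≠ b and M·a + (N−M)·b ≠ 0, and define x_j = a if j ∈ A and x_j = b otherwise. Let y_k = (1/√N)·∑_{j=0}^{N−1} x_j·exp(−2πi·j·k/N) be the discrete Fourier transform of x, and let N_y be the number of indices k with y_k ≠ 0. Then M·N_y ≥ N. -/
open Real Complex

/-! Subtracting the constant `b` turns `x` into `u = x - b`, whose support is exactly `A`. The DFT of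
a constant vanishes at every nonzero frequency, so `𝓕 u` agrees with `√N • y` away from `0`; as
`y 0 = (M a + (N - M) b) / √N ≠ 0`, the DFT of `u` has at most `N_y` nonzero coefficients. The
Donoho–Stark inequality `N ≤ #supp u · #supp (𝓕 u)` then gives `N ≤ M · N_y`. -/

open Finset
open scoped ZMod

lemma Finset.sum_univ_ite_mem_const {ι R : Type*} [Fintype ι] [DecidableEq ι] [Ring R]
    (A : Finset ι) (a b : R) :
    ∑ j, (if j ∈ A then a else b) = #A * a + (Fintype.card ι - #A) * b := by
  simp only [sum_ite, sum_const, subset_univ, filter_mem_eq_of_subset, filter_not,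
    ← compl_eq_univ_sdiff, card_compl, nsmul_eq_mul, Nat.cast_sub A.card_le_univ]

lemma sum_norm_le_card_support_mul {ι E : Type*} [Fintype ι] [NormedAddCommGroup E]
    [DecidableEq E] (f : ι → E) {C : ℝ} (hC : ∀ i, ‖f i‖ ≤ C) :
    ∑ i, ‖f i‖ ≤ #{i | f i ≠ 0} * C := by
  rw [← sum_filter_of_ne (p := fun i => f i ≠ 0) fun i _ h hi => h (by simp [hi])]
  simpa using sum_le_card_nsmul _ _ C fun i _ => hC i

namespace ZMod

variable {N : ℕ} [NeZero N]

lemma finEquiv_apply (j : Fin N) : finEquiv N j = ((j : ℕ) : ZMod N) := by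
  obtain ⟨n, rfl⟩ := Nat.exists_eq_succ_of_ne_zero (NeZero.ne N)
  exact (Fin.cast_val_eq_self j).symm

lemma stdAddChar_neg_natCast_mul (j k : ℕ) :
    stdAddChar (-((j : ZMod N) * (k : ZMod N))) = Complex.exp (-2 * π * I * j * k / N) := by
  have : -((j : ZMod N) * (k : ZMod N)) = ((-(j * k : ℤ) : ℤ) : ZMod N) := by push_cast; ring
  rw [this, stdAddChar_coe]
  congr 1
  push_cast
  ring

lemma dft_comp_finEquiv_symm (x : Fin N → ℂ) (k : Fin N) :
    𝓕 (x ∘ (finEquiv N).symm) (finEquiv N k) =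
      ∑ j : Fin N, x j * Complex.exp (-2 * π * I * (j : ℕ) * (k : ℕ) / N) := by
  rw [dft_apply, ← (finEquiv N).toEquiv.sum_comp]
  refine sum_congr rfl fun j _ => ?_
  rw [RingEquiv.toEquiv_eq_coe, RingEquiv.coe_toEquiv, Function.comp_apply,
    RingEquiv.symm_apply_apply, finEquiv_apply, finEquiv_apply, stdAddChar_neg_natCast_mul,
    smul_eq_mul, mul_comm]

lemma dft_const_of_ne_zero (c : ℂ) {k : ZMod N} (hk : k ≠ 0) : 𝓕 (fun _ => c) k = 0 := by
  rw [dft_apply, ← sum_smul]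
  convert zero_smul ℂ c
  rw [← AddChar.sum_eq_zero_of_ne_one (isPrimitive_stdAddChar N (neg_ne_zero.mpr hk))]
  simp [AddChar.mulShift_apply, mul_comm]

lemma card_support_dft_sub_const_le (f : ZMod N → ℂ) (c : ℂ) (hf : 𝓕 f 0 ≠ 0) :
    #{k | 𝓕 (f - fun _ => c) k ≠ 0} ≤ #{k | 𝓕 f k ≠ 0} := by
  refine card_le_card fun k => ?_
  simp only [mem_filter, mem_univ, true_and]
  rcases eq_or_ne k 0 with rfl | hk
  · exact fun _ => hf
  · simp [map_sub, dft_const_of_ne_zero c hk]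

variable {E : Type*} [NormedAddCommGroup E] [NormedSpace ℂ E]

lemma norm_dft_le_sum_norm (f : ZMod N → E) (k : ZMod N) : ‖𝓕 f k‖ ≤ ∑ j, ‖f j‖ := by
  rw [dft_apply]
  refine (norm_sum_le _ _).trans_eq (sum_congr rfl fun j _ => ?_)
  rw [norm_smul, stdAddChar_apply, Circle.norm_coe, one_mul]

/-- The Donoho–Stark uncertainty principle: bound `‖𝓕 f‖_∞ ≤ #supp f · ‖f‖_∞`, apply the same
bound to `𝓕 f`, and use `𝓕 (𝓕 f) = N • f (-·)`. -/
theorem card_support_mul_card_support_dft [DecidableEq E] {f : ZMod N → E} (hf : f ≠ 0) :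
    N ≤ #{j | f j ≠ 0} * #{k | 𝓕 f k ≠ 0} := by
  obtain ⟨j₀, -, hj₀⟩ := exists_max_image univ (‖f ·‖) univ_nonempty
  have hpos : 0 < ‖f j₀‖ := by
    obtain ⟨j, hj⟩ := Function.ne_iff.mp hf
    exact (norm_pos_iff.mpr hj).trans_le (hj₀ j (mem_univ j))
  have hdft : ∀ k, ‖𝓕 f k‖ ≤ #{j | f j ≠ 0} * ‖f j₀‖ := fun k =>
    (norm_dft_le_sum_norm f k).trans (sum_norm_le_card_support_mul f fun j => hj₀ j (mem_univ j))
  have hNC : N * ‖f j₀‖ ≤ #{k | 𝓕 f k ≠ 0} * (#{j | f j ≠ 0} * ‖f j₀‖) :=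
    calc N * ‖f j₀‖ = ‖𝓕 (𝓕 f) (-j₀)‖ := by simp [dft_dft, norm_smul]
      _ ≤ ∑ k, ‖𝓕 f k‖ := norm_dft_le_sum_norm _ _
      _ ≤ _ := sum_norm_le_card_support_mul _ hdft
  rw [← mul_assoc, mul_comm (#{k | 𝓕 f k ≠ 0} : ℝ)] at hNC
  exact_mod_cast le_of_mul_le_mul_right hNC hpos

end ZMod

theorem stmt_16_general (N : ℕ) (A : Finset (Fin N)) (M : ℕ)
    (hA : A.card = M) (hM : 1 ≤ M)
    (a b : ℂ) (hab : a ≠ b) (h0 : (M : ℂ) * a + ((N : ℂ) - M) * b ≠ 0)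
    (x : Fin N → ℂ) (hx : ∀ j : Fin N, x j = if j ∈ A then a else b)
    (y : Fin N → ℂ)
    (hy : ∀ k : Fin N, y k = (1 / (Real.sqrt N : ℂ)) *
        ∑ j : Fin N, x j * Complex.exp (-2 * Real.pi * Complex.I * (j : ℕ) * (k : ℕ) / N))
    (Ny : ℕ) (hNy : Ny = (Finset.univ.filter fun k : Fin N => y k ≠ 0).card) :
    N ≤ M * Ny := by
  have : NeZero N := ⟨by have := A.card_le_univ; rw [Fintype.card_fin] at this; omega⟩
  set e := ZMod.finEquiv N
  set X : ZMod N → ℂ := x ∘ e.symm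
  have hsqrt : (Real.sqrt N : ℂ) ≠ 0 := by simp [NeZero.ne N]
  have hyX : ∀ k, y k = 1 / (Real.sqrt N : ℂ) * 𝓕 X (e k) := fun k => by
    rw [hy, ZMod.dft_comp_finEquiv_symm]
  have hNy' : Ny = #{k | 𝓕 X k ≠ 0} :=
    hNy ▸ card_equiv e.toEquiv (by simp [hyX, hsqrt])
  have hX0 : 𝓕 X 0 ≠ 0 := by
    rwa [ZMod.dft_apply_zero, Fintype.sum_equiv e.symm.toEquiv X x fun _ => rfl, funext hx,
      sum_univ_ite_mem_const, Fintype.card_fin, hA]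
  set u : ZMod N → ℂ := X - fun _ => b
  have hsupp : #{j | u j ≠ 0} = M := by
    refine (card_equiv e.toEquiv.symm fun j => ?_).trans hA
    by_cases hj : e.symm j ∈ A <;> simp [u, X, hx, hj, sub_eq_zero, hab]
  have hne : u ≠ 0 := fun h => by simp [h] at hsupp; omega
  calc N ≤ #{j | u j ≠ 0} * #{k | 𝓕 u k ≠ 0} := ZMod.card_support_mul_card_support_dft hne
    _ ≤ M * Ny := by
        rw [hsupp, hNy']
        exact Nat.mul_le_mul_left M (ZMod.card_support_dft_sub_const_le X b hX0)

theorem stmt_16 (N : ℕ) (hN : 1 ≤ N) (A : Finset (Fin N)) (M : ℕ)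
    (hA : A.card = M) (hM : 1 ≤ M)
    (a b : ℂ) (hab : a ≠ b) (h0 : (M : ℂ) * a + ((N : ℂ) - M) * b ≠ 0)
    (x : Fin N → ℂ) (hx : ∀ j : Fin N, x j = if j ∈ A then a else b)
    (y : Fin N → ℂ)
    (hy : ∀ k : Fin N, y k = (1 / (Real.sqrt N : ℂ)) *
        ∑ j : Fin N, x j * Complex.exp (-2 * Real.pi * Complex.I * (j : ℕ) * (k : ℕ) / N))
    (Ny : ℕ) (hNy : Ny = (Finset.univ.filter fun k : Fin N => y k ≠ 0).card) :
    N ≤ M * Ny :=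
  stmt_16_general N A M hA hM a b hab h0 x hx y hy Ny hNy
end

section
/- Let s, P, P₁, M be natural numbers with P ≥ 1, P₁ ≥ 1 and M ≥ 2, and let A = { s + r·P : r = 0, 1, …, M−1 }. If s + P₁ ∈ A and s + (M−1)·P₁ ∈ A, then P₁ = P. -/
/-! Writing `P₁ = r₁ P` with `1 ≤ r₁ < M`, the second membership gives `(M - 1) r₁ P = r₂ P`
with `r₂ < M`, so `(M - 1) r₁ ≤ M - 1` and hence `r₁ = 1`. -/

theorem Nat.eq_one_of_mul_lt_add_one {m r : ℕ} (hm : 0 < m) (hr : 0 < r) (h : m * r < m + 1) :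
    r = 1 :=
  le_antisymm (Nat.le_of_mul_le_mul_left (by rw [mul_one]; omega) hm) hr

theorem stmt_17_general (s P P₁ M : ℕ) (hP₁ : 1 ≤ P₁)
    (A : Set ℕ) (hA : A = {n : ℕ | ∃ r, r < M ∧ n = s + r * P})
    (h1 : s + P₁ ∈ A) (h2 : s + (M - 1) * P₁ ∈ A) :
    P₁ = P := by
  subst hA
  obtain ⟨r₁, hr₁M, e₁⟩ := h1
  obtain ⟨r₂, hr₂M, e₂⟩ := h2
  have hP₁_eq : P₁ = r₁ * P := by omega
  have hr₁P : 0 < r₁ * P := by omega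
  have hr₁_pos : 0 < r₁ := Nat.pos_of_mul_pos_right hr₁P
  have hr₂ : (M - 1) * r₁ = r₂ :=
    Nat.eq_of_mul_eq_mul_right (Nat.pos_of_mul_pos_left hr₁P)
      (by rw [mul_assoc, ← hP₁_eq]; exact Nat.add_left_cancel e₂)
  have hr₁ : r₁ = 1 := Nat.eq_one_of_mul_lt_add_one (m := M - 1) (by omega) hr₁_pos (by omega)
  rw [hP₁_eq, hr₁, one_mul]

theorem stmt_17 (s P P₁ M : ℕ) (hP : 1 ≤ P) (hP₁ : 1 ≤ P₁) (hM : 2 ≤ M)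
    (A : Set ℕ) (hA : A = {n : ℕ | ∃ r, r < M ∧ n = s + r * P})
    (h1 : s + P₁ ∈ A) (h2 : s + (M - 1) * P₁ ∈ A) :
    P₁ = P :=
  stmt_17_general s P P₁ M hP₁ A hA h1 h2
end

section
/- Let N, P, y, d be natural numbers with N ≥ 1, P ≥ 1, P² ≤ N, gcd(d, P) = 1, and 2·|P·y − N·d| ≤ P (equivalently |y/N − d/P| ≤ 1/(2N) ≤ 1/(2P²)). Then d/P is a convergent of the continued fraction expansion of the rational number y/N; that is, there exists an index n such that the n-th convergent of the continued fraction of y/N equals d/P. -/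
/-!
Writing `r = P y - N d`, the hypotheses give `|y/N - d/P| = |r|/(N P) ≤ 1/(2N) ≤ 1/(2P²)`, and
the inequality is strict: equality would force `N = P²`, but then `P ∣ r` and `2|r| ≤ P` give
`r = 0`. Since `gcd(d, P) = 1`, `P` is the denominator of `d/P`, so Legendre's theorem
(`Real.exists_convs_eq_rat`) makes `d/P` a convergent of `y/N` computed in `ℝ`; convergents of a
rational number do not depend on the field in which they are computed.
-/

theorem GenContFract.ratCast_convs {K : Type*} [Field K] [LinearOrder K] [IsStrictOrderedRing K]
    [FloorRing K] (q : ℚ) (n : ℕ) :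
    (((GenContFract.of q).convs n : ℚ) : K) = (GenContFract.of (q : K)).convs n := by
  induction n generalizing q with
  | zero => simp [zeroth_conv_eq_h, of_h_eq_floor]
  | succ n ih =>
    rw [convs_succ, convs_succ, ← Rat.cast_fract, ← Rat.cast_inv, ← ih, Rat.floor_cast]
    norm_cast

theorem Rat.exists_convs_eq_of_abs_sub_lt {x q : ℚ} (h : |x - q| < 1 / (2 * (q.den : ℚ) ^ 2)) :
    ∃ n, (GenContFract.of x).convs n = q := by
  have hℝ : |(x : ℝ) - q| < 1 / (2 * (q.den : ℝ) ^ 2) := by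
    simpa using (Rat.cast_lt (K := ℝ)).mpr h
  obtain ⟨n, hn⟩ := Real.exists_convs_eq_rat hℝ
  exact ⟨n, by exact_mod_cast (GenContFract.ratCast_convs x n).trans hn⟩

theorem two_mul_abs_mul_sub_mul_mul_sq_lt {N P y d : ℤ} (hP : 0 < P) (hPN : P ^ 2 ≤ N)
    (hres : 2 * |P * y - N * d| ≤ P) : 2 * |P * y - N * d| * P ^ 2 < N * P := by
  rcases hPN.lt_or_eq with hlt | rfl
  · calc 2 * |P * y - N * d| * P ^ 2 ≤ P * P ^ 2 := by gcongr
      _ < N * P := by nlinarith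
  · have hfac : P * y - P ^ 2 * d = P * (y - P * d) := by ring
    rw [hfac, abs_mul, abs_of_pos hP] at hres ⊢
    have hzero : |y - P * d| = 0 := by
      have : 2 * |y - P * d| ≤ 1 := by nlinarith
      have := abs_nonneg (y - P * d)
      omega
    rw [hzero, mul_zero, mul_zero, zero_mul]
    positivity

theorem abs_div_sub_div_lt_of_two_mul_abs_le {N P y d : ℤ} (hP : 0 < P) (hPN : P ^ 2 ≤ N)
    (hres : 2 * |P * y - N * d| ≤ P) : |(y : ℚ) / N - d / P| < 1 / (2 * P ^ 2) := by
  have hN : (0 : ℚ) < N := by exact_mod_cast (by positivity : 0 < P ^ 2).trans_le hPN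
  have hPq : (0 : ℚ) < P := by exact_mod_cast hP
  have key : 2 * |(P : ℚ) * y - N * d| * P ^ 2 < N * P := by
    exact_mod_cast two_mul_abs_mul_sub_mul_mul_sq_lt hP hPN hres
  rw [div_sub_div _ _ hN.ne' hPq.ne', abs_div, abs_of_pos (mul_pos hN hPq),
    div_lt_div_iff₀ (mul_pos hN hPq) (by positivity), one_mul, mul_comm (y : ℚ)]
  linarith

theorem stmt_18_general (N P y d : ℕ) (hP : 1 ≤ P) (hPN : P ^ 2 ≤ N)
    (hgcd : Nat.gcd d P = 1)
    (hres : 2 * |(P : ℤ) * y - (N : ℤ) * d| ≤ (P : ℤ)) :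
    ∃ n : ℕ, (GenContFract.of ((y : ℚ) / N)).convs n = (d : ℚ) / P := by
  have hP' : (0 : ℤ) < P := by exact_mod_cast hP
  have hden : ((d : ℚ) / P).den = P := by
    simpa using Rat.den_div_eq_of_coprime (a := d) hP' (by simpa using hgcd)
  apply Rat.exists_convs_eq_of_abs_sub_lt
  rw [hden]
  simpa using abs_div_sub_div_lt_of_two_mul_abs_le hP' (by exact_mod_cast hPN) hres

theorem stmt_18 (N P y d : ℕ) (hN : 1 ≤ N) (hP : 1 ≤ P) (hPN : P ^ 2 ≤ N)
    (hgcd : Nat.gcd d P = 1)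
    (hres : 2 * |(P : ℤ) * y - (N : ℤ) * d| ≤ (P : ℤ)) :
    ∃ n : ℕ, (GenContFract.of ((y : ℚ) / N)).convs n = (d : ℚ) / P :=
  stmt_18_general N P y d hP hPN hgcd hres
end

section
/- Let N ≥ 1 be an integer, let A be a subset of {0,…,N−1} with |A| = M, let p : {0,…,N−1} → ℝ be nonnegative with ∑_{z=0}^{N−1} p_z = 1 and ∑_{z ∈ A} p_z = α, and let u : {0,…,N−1} → ℂ satisfy |u_z| = 1 for every z. Then |(1/√N)·∑_{z=0}^{N−1} √(p_z)·u_z|² ≤ ( √(α·M/N) + √((1−α)·(1 − M/N)) )². -/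
/-!
By the triangle inequality and `‖u z‖ = 1`, the amplitude is at most `(1/√N) ∑_z √(p z)`.
Splitting this sum over `A` and its complement and applying Cauchy–Schwarz to each part gives
`∑_{z ∈ A} √(p z) ≤ √(M α)` and `∑_{z ∉ A} √(p z) ≤ √((N - M)(1 - α))`; dividing by `√N` yields
the bound.
-/

open Real Complex

open Finset

theorem Real.sum_sqrt_le_sqrt_card_mul_sum {ι : Type*} (s : Finset ι) {f : ι → ℝ}
    (hf : ∀ i ∈ s, 0 ≤ f i) : ∑ i ∈ s, √(f i) ≤ √(#s * ∑ i ∈ s, f i) := by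
  apply Real.le_sqrt_of_sq_le
  calc (∑ i ∈ s, √(f i)) ^ 2 ≤ #s * ∑ i ∈ s, √(f i) ^ 2 := sq_sum_le_card_mul_sum_sq
    _ = #s * ∑ i ∈ s, f i := by
      rw [sum_congr rfl fun i hi => Real.sq_sqrt (hf i hi)]

theorem Complex.norm_sum_ofReal_mul_le {ι : Type*} (s : Finset ι) {a : ι → ℝ}
    (ha : ∀ i ∈ s, 0 ≤ a i) {u : ι → ℂ} (hu : ∀ i ∈ s, ‖u i‖ ≤ 1) :
    ‖∑ i ∈ s, (a i : ℂ) * u i‖ ≤ ∑ i ∈ s, a i := by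
  refine (norm_sum_le _ _).trans (sum_le_sum fun i hi => ?_)
  rw [norm_mul, Complex.norm_of_nonneg (ha i hi)]
  exact mul_le_of_le_one_right (ha i hi) (hu i hi)

theorem stmt_19 (N : ℕ) (hN : 1 ≤ N) (A : Finset (Fin N)) (M : ℕ) (hA : A.card = M)
    (p : Fin N → ℝ) (hp : ∀ z, 0 ≤ p z) (hsum : ∑ z : Fin N, p z = 1)
    (α : ℝ) (hα : ∑ z ∈ A, p z = α)
    (u : Fin N → ℂ) (hu : ∀ z, ‖u z‖ = 1) :
    ‖(1 / (Real.sqrt N : ℂ)) *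
        ∑ z : Fin N, (Real.sqrt (p z) : ℂ) * u z‖ ^ 2
      ≤ (Real.sqrt (α * M / N) + Real.sqrt ((1 - α) * (1 - (M : ℝ) / N))) ^ 2 := by
  have hN0 : (N : ℝ) ≠ 0 := by positivity
  have hcompl : ∑ z ∈ Aᶜ, p z = 1 - α := by
    rw [← hsum, ← hα, ← sum_add_sum_compl A p, add_sub_cancel_left]
  have hcard : (#Aᶜ : ℝ) = N - M := by
    rw [card_compl, Fintype.card_fin, ← hA,
      Nat.cast_sub ((card_le_univ A).trans_eq (Fintype.card_fin N))]
  have hsplit : ∑ z, √(p z) ≤ √(M * α) + √((N - M) * (1 - α)) := by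
    rw [← sum_add_sum_compl A, ← hcompl, ← hα, ← hcard, ← hA]
    gcongr <;> exact Real.sum_sqrt_le_sqrt_card_mul_sum _ fun z _ => hp z
  have hamp : ‖(1 / (√N : ℂ)) * ∑ z, (√(p z) : ℂ) * u z‖
      ≤ √(α * M / N) + √((1 - α) * (1 - (M : ℝ) / N)) := by
    calc _ ≤ (1 / √N) * ∑ z, √(p z) := by
          rw [norm_mul, ← ofReal_one, ← ofReal_div, Complex.norm_of_nonneg (by positivity)]
          gcongr
          exact norm_sum_ofReal_mul_le _ (fun z _ => sqrt_nonneg _) fun z _ => (hu z).le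
      _ ≤ (1 / √N) * (√(M * α) + √((N - M) * (1 - α))) := by gcongr
      _ = _ := by
        rw [mul_add, one_div_mul_eq_div, one_div_mul_eq_div, ← sqrt_div' _ (Nat.cast_nonneg N),
          ← sqrt_div' _ (Nat.cast_nonneg N)]
        congr 2 <;> field_simp
  exact pow_le_pow_left₀ (norm_nonneg _) hamp 2
end
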